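/- arXiv:1704.03579 — 8 statements merged into one kernel-verified Lean document; each statement's English description precedes it below -/
import Mathlib

section
/- Let 0<α<1. Then the function f(t)=t^{α−1}·ln t satisfies (D^α f)(t) = Γ(α)/t for all t>0. -/
open Real MeasureTheory intervalIntegral Set

lemma rpow_neg_le_aux {x c y : ℝ} (hx : 0 < x) (hc : x⁻¹ ≤ c) (hy : 0 ≤ y) :
    x ^ (-y) ≤ c ^ y := by
  rw [Real.rpow_neg hx.le, ← Real.inv_rpow hx.le]
  exact Real.rpow_le_rpow (by positivity) hc hy


lemma contOn_aux (a b : ℝ) :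
    ContinuousOn (fun u : ℝ => u ^ a * (1 - u) ^ b) (Ioo (0:ℝ) 1) := by
  intro u hu
  obtain ⟨hu0, hu1⟩ := hu
  apply ContinuousAt.continuousWithinAt
  apply ContinuousAt.mul
  · exact Real.continuousAt_rpow_const u a (Or.inl (ne_of_gt hu0))
  · exact (Real.continuousAt_rpow_const (1 - u) b
      (Or.inl (by intro h; rw [sub_eq_zero] at h; exact absurd h.symm (ne_of_lt hu1)))).comp
      ((continuous_const.sub continuous_id).continuousAt)

lemma aesm_of_contOn {f : ℝ → ℝ} (h : ContinuousOn f (Ioo (0:ℝ) 1)) :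
    AEStronglyMeasurable f (volume.restrict (Ioc (0:ℝ) 1)) := by
  rw [← Measure.restrict_congr_set Ioo_ae_eq_Ioc]
  exact h.aestronglyMeasurable measurableSet_Ioo

lemma aesm_sub {f : ℝ → ℝ} (h : AEStronglyMeasurable f (volume.restrict (Ioc (0:ℝ) 1)))
    {s : Set ℝ} (hs : s ⊆ Ioc (0:ℝ) 1) :
    AEStronglyMeasurable f (volume.restrict s) :=
  h.mono_measure (Measure.restrict_mono hs le_rfl)

/-- Dominating function integrability: `u^(α/2-1) * (1-u)^(-α)` on `(0,1]`. -/
lemma W_integrable {α : ℝ} (hα0 : 0 < α) (hα1 : α < 1) :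
    IntegrableOn (fun u : ℝ => u ^ (α / 2 - 1) * (1 - u) ^ (-α)) (Ioc (0:ℝ) 1) := by
  have hmeas := aesm_of_contOn (contOn_aux (α / 2 - 1) (-α))
  have hsplit : Ioc (0:ℝ) 1 = Ioc (0:ℝ) (1/2) ∪ Ioc (1/2 : ℝ) 1 := by
    rw [Set.Ioc_union_Ioc_eq_Ioc] <;> norm_num
  rw [hsplit]
  apply IntegrableOn.union
  · -- near 0 : bound by 2^α * u^(α/2-1)
    have hg : IntegrableOn (fun u : ℝ => 2 ^ α * u ^ (α / 2 - 1)) (Ioc (0:ℝ) (1/2)) := by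
      have := (intervalIntegrable_rpow' (a := 0) (b := 1/2) (r := α / 2 - 1)
        (by linarith)).const_mul (2 ^ α : ℝ)
      rwa [intervalIntegrable_iff_integrableOn_Ioc_of_le (by norm_num)] at this
    refine hg.integrable.mono' (aesm_sub hmeas (Set.Ioc_subset_Ioc le_rfl (by norm_num))) ?_
    filter_upwards [ae_restrict_mem measurableSet_Ioc] with u hu
    obtain ⟨hu0, hu2⟩ := hu
    have h1u : (0:ℝ) < 1 - u := by linarith
    rw [Real.norm_eq_abs, abs_of_nonneg (by positivity), mul_comm ((2:ℝ) ^ α)]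
    apply mul_le_mul_of_nonneg_left _ (by positivity)
    exact rpow_neg_le_aux h1u (by rw [inv_le_comm₀ (by linarith) (by norm_num)]; linarith) hα0.le
  · -- near 1 : bound by 2^(1-α/2) * (1-u)^(-α)
    have hg : IntegrableOn (fun u : ℝ => 2 ^ (1 - α / 2) * (1 - u) ^ (-α)) (Ioc (1/2 : ℝ) 1) := by
      have h0 : IntervalIntegrable (fun x : ℝ => x ^ (-α)) volume 0 (1/2) :=
        intervalIntegrable_rpow' (by linarith)
      have h1 := (h0.comp_sub_left 1).symm
      norm_num at h1
      have := h1.const_mul (2 ^ (1 - α / 2) : ℝ)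
      rwa [intervalIntegrable_iff_integrableOn_Ioc_of_le (by norm_num)] at this
    refine hg.integrable.mono' (aesm_sub hmeas (Set.Ioc_subset_Ioc (by norm_num) le_rfl)) ?_
    filter_upwards [ae_restrict_mem measurableSet_Ioc] with u hu
    obtain ⟨hu2, hu1⟩ := hu
    have hu0 : (0:ℝ) < u := by linarith
    rw [Real.norm_eq_abs, abs_of_nonneg (mul_nonneg (Real.rpow_nonneg hu0.le _)
      (Real.rpow_nonneg (by linarith) _))]
    apply mul_le_mul_of_nonneg_right _ (Real.rpow_nonneg (by linarith) _)
    have he : α / 2 - 1 = -(1 - α / 2) := by ring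
    rw [he]
    exact rpow_neg_le_aux hu0 (by rw [inv_le_comm₀ hu0 (by norm_num)]; linarith) (by linarith)

/-- Integrability of the beta integrand. -/
lemma w_intervalIntegrable {α : ℝ} (hα0 : 0 < α) (hα1 : α < 1) :
    IntervalIntegrable (fun u : ℝ => u ^ (α - 1) * (1 - u) ^ (-α)) volume 0 1 := by
  rw [intervalIntegrable_iff_integrableOn_Ioc_of_le (by norm_num)]
  refine (W_integrable hα0 hα1).integrable.mono'
    (aesm_of_contOn (contOn_aux (α - 1) (-α))) ?_
  filter_upwards [ae_restrict_mem measurableSet_Ioc] with u hu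
  obtain ⟨hu0, hu1⟩ := hu
  have h1u : (0:ℝ) ≤ 1 - u := by linarith
  rw [Real.norm_eq_abs, abs_of_nonneg (mul_nonneg (Real.rpow_nonneg hu0.le _)
    (Real.rpow_nonneg h1u _))]
  exact mul_le_mul_of_nonneg_right
    (Real.rpow_le_rpow_of_exponent_ge hu0 hu1 (by linarith))
    (Real.rpow_nonneg h1u _)

/-- Integrability of the beta integrand times `log`. -/
lemma wlog_intervalIntegrable {α : ℝ} (hα0 : 0 < α) (hα1 : α < 1) :
    IntervalIntegrable (fun u : ℝ => u ^ (α - 1) * (1 - u) ^ (-α) * Real.log u)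
      volume 0 1 := by
  rw [intervalIntegrable_iff_integrableOn_Ioc_of_le (by norm_num)]
  refine (((W_integrable hα0 hα1).integrable.const_mul (2/α)).mono'
    (aesm_of_contOn ((contOn_aux (α - 1) (-α)).mul
      (Real.continuousOn_log.mono (fun x hx => ne_of_gt hx.1)))) ?_)
  filter_upwards [ae_restrict_mem measurableSet_Ioc] with u hu
  obtain ⟨hu0, hu1⟩ := hu
  have h1u : (0:ℝ) ≤ 1 - u := by linarith
  rw [Real.norm_eq_abs, abs_mul]
  have hlog : |Real.log u| ≤ (2/α) * u ^ (-(α/2)) := by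
    rcases eq_or_lt_of_le hu1 with h | h
    · rw [h]
      simp only [Real.log_one, abs_zero]
      positivity
    · have : |Real.log u| = Real.log u⁻¹ := by
        rw [Real.log_inv, abs_of_nonpos (Real.log_nonpos hu0.le hu1)]
      rw [this]
      have := Real.log_le_rpow_div (x := u⁻¹) (ε := α/2) (by positivity) (by positivity)
      calc Real.log u⁻¹ ≤ (u⁻¹) ^ (α/2) / (α/2) := this
        _ = (2/α) * u ^ (-(α/2)) := by
            rw [Real.rpow_neg hu0.le, ← Real.inv_rpow hu0.le]
            ring
  calc |u ^ (α - 1) * (1 - u) ^ (-α)| * |Real.log u|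
      ≤ (u ^ (α - 1) * (1 - u) ^ (-α)) * ((2/α) * u ^ (-(α/2))) := by
        rw [abs_of_nonneg (mul_nonneg (Real.rpow_nonneg hu0.le _)
          (Real.rpow_nonneg h1u _))]
        exact mul_le_mul_of_nonneg_left hlog
          (mul_nonneg (Real.rpow_nonneg hu0.le _) (Real.rpow_nonneg h1u _))
    _ = (2/α) * (u ^ (α - 1) * u ^ (-(α/2)) * (1 - u) ^ (-α)) := by ring
    _ = (2/α) * (u ^ (α/2 - 1) * (1 - u) ^ (-α)) := by
        rw [← Real.rpow_add hu0, show α - 1 + -(α/2) = α/2 - 1 by ring]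

/-- The real beta integral value. -/
lemma beta_value {α : ℝ} (hα0 : 0 < α) (hα1 : α < 1) :
    ∫ u in (0:ℝ)..1, u ^ (α - 1) * (1 - u) ^ (-α)
      = Real.Gamma α * Real.Gamma (1 - α) := by
  have hs : 0 < Complex.re (α : ℂ) := by simpa using hα0
  have ht : 0 < Complex.re ((1 - α : ℝ) : ℂ) := by simpa using (by linarith : (0:ℝ) < 1 - α)
  have h := Complex.Gamma_mul_Gamma_eq_betaIntegral hs ht
  have hsum : (α : ℂ) + ((1 - α : ℝ) : ℂ) = 1 := by push_cast; ring
  rw [hsum, Complex.Gamma_one, one_mul] at h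
  have hβ : Complex.betaIntegral (α : ℂ) ((1 - α : ℝ) : ℂ)
      = ((∫ u in (0:ℝ)..1, u ^ (α - 1) * (1 - u) ^ (-α) : ℝ) : ℂ) := by
    rw [Complex.betaIntegral, ← intervalIntegral.integral_ofReal]
    apply intervalIntegral.integral_congr
    intro x hx
    rw [Set.uIcc_of_le (by norm_num : (0:ℝ) ≤ 1)] at hx
    obtain ⟨hx0, hx1⟩ := hx
    have h1x : (0:ℝ) ≤ 1 - x := by linarith
    have e1 : (x : ℂ) ^ ((α : ℂ) - 1) = ((x ^ (α - 1) : ℝ) : ℂ) := by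
      rw [Complex.ofReal_cpow hx0]
      push_cast
      ring_nf
    have e2 : (1 - (x:ℂ)) ^ (((1 - α : ℝ) : ℂ) - 1) = (((1 - x) ^ (-α) : ℝ) : ℂ) := by
      have : ((1:ℂ) - x) = (((1 - x : ℝ)) : ℂ) := by push_cast; ring
      rw [this, Complex.ofReal_cpow h1x]
      push_cast
      ring_nf
    simp only [e1, e2, ← Complex.ofReal_mul]
  rw [hβ, Complex.Gamma_ofReal, Complex.Gamma_ofReal, ← Complex.ofReal_mul] at h
  exact_mod_cast h.symm

/-- The key computation: the RL integral of `s^(α-1) log s` equals `B log τ + C`. -/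
lemma key_integral {α : ℝ} (hα0 : 0 < α) (hα1 : α < 1) {τ : ℝ} (hτ : 0 < τ) :
    (∫ s in (0:ℝ)..τ, (s ^ (α - 1) * Real.log s) * (τ - s) ^ (-α))
      = Real.Gamma α * Real.Gamma (1 - α) * Real.log τ
        + ∫ u in (0:ℝ)..1, u ^ (α - 1) * (1 - u) ^ (-α) * Real.log u := by
  have hchange := intervalIntegral.integral_comp_mul_left
    (fun s => (s ^ (α - 1) * Real.log s) * (τ - s) ^ (-α)) (ne_of_gt hτ)
    (a := 0) (b := 1)
  rw [mul_zero, mul_one] at hchange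
  have hmain : (∫ x in (0:ℝ)..1, (( (τ*x) ^ (α - 1) * Real.log (τ*x)) * (τ - τ*x) ^ (-α)))
      = τ⁻¹ * ∫ x in (0:ℝ)..1,
          (x ^ (α - 1) * (1 - x) ^ (-α) * Real.log τ
            + x ^ (α - 1) * (1 - x) ^ (-α) * Real.log x) := by
    rw [← intervalIntegral.integral_const_mul]
    apply intervalIntegral.integral_congr
    intro x hx
    rw [Set.uIcc_of_le (by norm_num : (0:ℝ) ≤ 1)] at hx
    obtain ⟨hx0, hx1⟩ := hx
    beta_reduce
    have hza : (0:ℝ) ^ (α - 1) = 0 :=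
      Real.zero_rpow (sub_ne_zero_of_ne (ne_of_lt hα1))
    have hzb : (0:ℝ) ^ (-α) = 0 :=
      Real.zero_rpow (neg_ne_zero.mpr (ne_of_gt hα0))
    rcases eq_or_lt_of_le hx0 with h0 | h0
    · rw [← h0, mul_zero, sub_zero, hza]
      ring
    rcases eq_or_lt_of_le hx1 with h1 | h1
    · rw [h1]
      simp [hzb]
    have h1x : (0:ℝ) < 1 - x := by linarith
    have e1 : (τ * x) ^ (α - 1) = τ ^ (α - 1) * x ^ (α - 1) :=
      Real.mul_rpow hτ.le hx0
    have e2 : (τ - τ * x) ^ (-α) = τ ^ (-α) * (1 - x) ^ (-α) := by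
      rw [show τ - τ * x = τ * (1 - x) by ring]
      exact Real.mul_rpow hτ.le h1x.le
    have e3 : Real.log (τ * x) = Real.log τ + Real.log x :=
      Real.log_mul (ne_of_gt hτ) (ne_of_gt h0)
    have e4 : τ ^ (α - 1) * τ ^ (-α) = τ⁻¹ := by
      rw [← Real.rpow_add hτ, show α - 1 + -α = -1 by ring, Real.rpow_neg_one]
    calc (τ * x) ^ (α - 1) * Real.log (τ * x) * (τ - τ * x) ^ (-α)
        = (τ ^ (α - 1) * τ ^ (-α)) * (x ^ (α - 1) * (1 - x) ^ (-α)
            * (Real.log τ + Real.log x)) := by rw [e1, e2, e3]; ring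
      _ = τ⁻¹ * (x ^ (α - 1) * (1 - x) ^ (-α) * Real.log τ
            + x ^ (α - 1) * (1 - x) ^ (-α) * Real.log x) := by rw [e4]; ring
  have hτne : τ ≠ 0 := ne_of_gt hτ
  have hchange' : (∫ x in (0:ℝ)..1,
      (( (τ*x) ^ (α - 1) * Real.log (τ*x)) * (τ - τ*x) ^ (-α)))
      = τ⁻¹ * ∫ s in (0:ℝ)..τ, (s ^ (α - 1) * Real.log s) * (τ - s) ^ (-α) := by
    rw [← smul_eq_mul]; exact hchange
  have hcancel : τ⁻¹ * (∫ s in (0:ℝ)..τ, (s ^ (α - 1) * Real.log s) * (τ - s) ^ (-α))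
      = τ⁻¹ * ∫ x in (0:ℝ)..1,
          (x ^ (α - 1) * (1 - x) ^ (-α) * Real.log τ
            + x ^ (α - 1) * (1 - x) ^ (-α) * Real.log x) := by
    rw [← hchange', hmain]
  have : (∫ s in (0:ℝ)..τ, (s ^ (α - 1) * Real.log s) * (τ - s) ^ (-α))
      = ∫ x in (0:ℝ)..1,
          (x ^ (α - 1) * (1 - x) ^ (-α) * Real.log τ
            + x ^ (α - 1) * (1 - x) ^ (-α) * Real.log x) :=
    mul_left_cancel₀ (inv_ne_zero hτne) hcancel
  rw [this, intervalIntegral.integral_add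
    ((w_intervalIntegrable hα0 hα1).mul_const _) (wlog_intervalIntegrable hα0 hα1),
    intervalIntegral.integral_mul_const, beta_value hα0 hα1]

/-- The Riemann–Liouville fractional derivative of order `α` (for `0 < α < 1`):
`(D^α f)(t) = (1/Γ(1-α)) · d/dt ∫₀ᵗ f(s)·(t-s)^(-α) ds`. -/
noncomputable def RLderiv (α : ℝ) (f : ℝ → ℝ) (t : ℝ) : ℝ :=
  (1 / Real.Gamma (1 - α)) *
    deriv (fun τ : ℝ => ∫ s in (0:ℝ)..τ, f s * (τ - s) ^ (-α)) t

/-- For `0 < α < 1`, the function `f(t) = t^(α-1)·ln t` satisfies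
`(D^α f)(t) = Γ(α)/t` for all `t > 0`. -/
theorem rl_deriv_talpha_log (α : ℝ) (hα0 : 0 < α) (hα1 : α < 1) :
    ∀ t : ℝ, 0 < t →
      RLderiv α (fun s : ℝ => s ^ (α - 1) * Real.log s) t = Real.Gamma α / t := by
  intro t ht
  set B := Real.Gamma α * Real.Gamma (1 - α) with hB
  set C := ∫ u in (0:ℝ)..1, u ^ (α - 1) * (1 - u) ^ (-α) * Real.log u with hC
  have hev : (fun τ : ℝ => ∫ s in (0:ℝ)..τ,
      (s ^ (α - 1) * Real.log s) * (τ - s) ^ (-α))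
      =ᶠ[nhds t] (fun τ => B * Real.log τ + C) := by
    filter_upwards [IsOpen.mem_nhds isOpen_Ioi ht] with τ hτ
    exact key_integral hα0 hα1 hτ
  have hderiv : deriv (fun τ : ℝ => ∫ s in (0:ℝ)..τ,
      (s ^ (α - 1) * Real.log s) * (τ - s) ^ (-α)) t = B / t := by
    rw [Filter.EventuallyEq.deriv_eq hev]
    have : HasDerivAt (fun τ => B * Real.log τ + C) (B * t⁻¹) t :=
      ((Real.hasDerivAt_log (ne_of_gt ht)).const_mul B).add_const C
    rw [this.deriv]
    rw [div_eq_mul_inv]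
  have hΓ : Real.Gamma (1 - α) ≠ 0 := ne_of_gt (Real.Gamma_pos_of_pos (by linarith))
  rw [RLderiv, hderiv, hB]
  field_simp
end

section
/- Let 0<α<1, m≠0, and suppose Δ := 2mα+α−m ≠ 0. Define Y₁ = −((m+1)α/Δ)·X₃ − (m(α−1)/Δ)·X₄, Y₂ = −X₁, Y₃ = (mα/Δ)·(X₃−X₄), Y₄ = −X₂. Then for every twice continuously differentiable function f on Ω: [Y₁,Y₂]f = Y₂f, [Y₃,Y₄]f = Y₄f, and [Y₁,Y₃]f = [Y₁,Y₄]f = [Y₂,Y₃]f = [Y₂,Y₄]f = 0; hence the Lie algebra spanned by Y₁,…,Y₄ is the direct sum of the two-dimensional non-abelian algebras span{Y₁,Y₂} and span{Y₃,Y₄}. -/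
set_option maxHeartbeats 1000000


private abbrev E4 : Type := ℝ × ℝ × ℝ × ℝ

private lemma line1 (x t u v : ℝ) :
    HasDerivAt (fun s : ℝ => ((s, t, u, v) : E4)) (1, 0, 0, 0) x :=
  (hasDerivAt_id x).prodMk (hasDerivAt_const x ((t, u, v) : ℝ × ℝ × ℝ))

private lemma line2 (x t u v : ℝ) :
    HasDerivAt (fun s : ℝ => ((x, s, u, v) : E4)) (0, 1, 0, 0) t :=
  (hasDerivAt_const t x).prodMk ((hasDerivAt_id t).prodMk (hasDerivAt_const t ((u, v) : ℝ × ℝ)))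

private lemma line3 (x t u v : ℝ) :
    HasDerivAt (fun s : ℝ => ((x, t, s, v) : E4)) (0, 0, 1, 0) u :=
  (hasDerivAt_const u x).prodMk ((hasDerivAt_const u t).prodMk
    ((hasDerivAt_id u).prodMk (hasDerivAt_const u v)))

private lemma line4 (x t u v : ℝ) :
    HasDerivAt (fun s : ℝ => ((x, t, u, s) : E4)) (0, 0, 0, 1) v :=
  (hasDerivAt_const v x).prodMk ((hasDerivAt_const v t).prodMk
    ((hasDerivAt_const v u).prodMk (hasDerivAt_id v)))

private lemma pd1 {G : Type} [NormedAddCommGroup G] [NormedSpace ℝ G] {φ : E4 → G}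
    {x t u v : ℝ} (hφ : DifferentiableAt ℝ φ (x, t, u, v)) :
    HasDerivAt (fun s => φ (s, t, u, v)) (fderiv ℝ φ (x, t, u, v) (1, 0, 0, 0)) x :=
  hφ.hasFDerivAt.comp_hasDerivAt x (line1 x t u v)

private lemma pd2 {G : Type} [NormedAddCommGroup G] [NormedSpace ℝ G] {φ : E4 → G}
    {x t u v : ℝ} (hφ : DifferentiableAt ℝ φ (x, t, u, v)) :
    HasDerivAt (fun s => φ (x, s, u, v)) (fderiv ℝ φ (x, t, u, v) (0, 1, 0, 0)) t :=
  hφ.hasFDerivAt.comp_hasDerivAt t (line2 x t u v)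

private lemma pd3 {G : Type} [NormedAddCommGroup G] [NormedSpace ℝ G] {φ : E4 → G}
    {x t u v : ℝ} (hφ : DifferentiableAt ℝ φ (x, t, u, v)) :
    HasDerivAt (fun s => φ (x, t, s, v)) (fderiv ℝ φ (x, t, u, v) (0, 0, 1, 0)) u :=
  hφ.hasFDerivAt.comp_hasDerivAt u (line3 x t u v)

private lemma pd4 {G : Type} [NormedAddCommGroup G] [NormedSpace ℝ G] {φ : E4 → G}
    {x t u v : ℝ} (hφ : DifferentiableAt ℝ φ (x, t, u, v)) :
    HasDerivAt (fun s => φ (x, t, u, s)) (fderiv ℝ φ (x, t, u, v) (0, 0, 0, 1)) v :=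
  hφ.hasFDerivAt.comp_hasDerivAt v (line4 x t u v)

private lemma pdw1 {g : E4 → (E4 →L[ℝ] ℝ)} {x t u v : ℝ} (w : E4)
    (hg : DifferentiableAt ℝ g (x, t, u, v)) :
    HasDerivAt (fun s => g (s, t, u, v) w) (fderiv ℝ g (x, t, u, v) (1, 0, 0, 0) w) x :=
  (ContinuousLinearMap.apply ℝ ℝ w).hasFDerivAt.comp_hasDerivAt x (pd1 hg)

private lemma pdw2 {g : E4 → (E4 →L[ℝ] ℝ)} {x t u v : ℝ} (w : E4)
    (hg : DifferentiableAt ℝ g (x, t, u, v)) :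
    HasDerivAt (fun s => g (x, s, u, v) w) (fderiv ℝ g (x, t, u, v) (0, 1, 0, 0) w) t :=
  (ContinuousLinearMap.apply ℝ ℝ w).hasFDerivAt.comp_hasDerivAt t (pd2 hg)

private lemma pdw3 {g : E4 → (E4 →L[ℝ] ℝ)} {x t u v : ℝ} (w : E4)
    (hg : DifferentiableAt ℝ g (x, t, u, v)) :
    HasDerivAt (fun s => g (x, t, s, v) w) (fderiv ℝ g (x, t, u, v) (0, 0, 1, 0) w) u :=
  (ContinuousLinearMap.apply ℝ ℝ w).hasFDerivAt.comp_hasDerivAt u (pd3 hg)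

private lemma pdw4 {g : E4 → (E4 →L[ℝ] ℝ)} {x t u v : ℝ} (w : E4)
    (hg : DifferentiableAt ℝ g (x, t, u, v)) :
    HasDerivAt (fun s => g (x, t, u, s) w) (fderiv ℝ g (x, t, u, v) (0, 0, 0, 1) w) v :=
  (ContinuousLinearMap.apply ℝ ℝ w).hasFDerivAt.comp_hasDerivAt v (pd4 hg)

private noncomputable def FF (f : ℝ → ℝ → ℝ → ℝ → ℝ) : E4 → ℝ :=
  fun p => f p.1 p.2.1 p.2.2.1 p.2.2.2

private noncomputable def GG (f : ℝ → ℝ → ℝ → ℝ → ℝ) : E4 → (E4 →L[ℝ] ℝ) :=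
  fderiv ℝ (FF f)

private noncomputable def BB (f : ℝ → ℝ → ℝ → ℝ → ℝ) (p : E4) : E4 →L[ℝ] E4 →L[ℝ] ℝ :=
  fderiv ℝ (GG f) p



/-- `X₁ f = ∂f/∂x`, where `f = f(x, t, u, v)`. -/
noncomputable def X1 (f : ℝ → ℝ → ℝ → ℝ → ℝ) : ℝ → ℝ → ℝ → ℝ → ℝ :=
  fun x t u v => deriv (fun x' => f x' t u v) x

/-- `X₂ f = t^(α-1) ∂f/∂v`. -/
noncomputable def X2 (α : ℝ) (f : ℝ → ℝ → ℝ → ℝ → ℝ) : ℝ → ℝ → ℝ → ℝ → ℝ :=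
  fun x t u v => t ^ (α - 1) * deriv (fun v' => f x t u v') v

/-- `X₃ f = x ∂f/∂x + (t/α) ∂f/∂t`. -/
noncomputable def X3 (α : ℝ) (f : ℝ → ℝ → ℝ → ℝ → ℝ) : ℝ → ℝ → ℝ → ℝ → ℝ :=
  fun x t u v => x * deriv (fun x' => f x' t u v) x + (t / α) * deriv (fun t' => f x t' u v) t

/-- `X₄ f = x ∂f/∂x + (u/m) ∂f/∂u + ((m+1)/m) v ∂f/∂v`. -/
noncomputable def X4 (m : ℝ) (f : ℝ → ℝ → ℝ → ℝ → ℝ) : ℝ → ℝ → ℝ → ℝ → ℝ :=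
  fun x t u v => x * deriv (fun x' => f x' t u v) x + (u / m) * deriv (fun u' => f x t u' v) u
    + ((m + 1) / m) * v * deriv (fun v' => f x t u v') v

/-- `Y₁ = -((m+1)α/Δ)·X₃ - (m(α-1)/Δ)·X₄` with `Δ = 2mα + α - m`. -/
noncomputable def Y1 (α m : ℝ) (f : ℝ → ℝ → ℝ → ℝ → ℝ) : ℝ → ℝ → ℝ → ℝ → ℝ :=
  fun x t u v =>
    -((m + 1) * α / (2 * m * α + α - m)) * X3 α f x t u v
      - (m * (α - 1) / (2 * m * α + α - m)) * X4 m f x t u v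

/-- `Y₂ = -X₁`. -/
noncomputable def Y2 (f : ℝ → ℝ → ℝ → ℝ → ℝ) : ℝ → ℝ → ℝ → ℝ → ℝ :=
  fun x t u v => -(X1 f x t u v)

/-- `Y₃ = (mα/Δ)·(X₃ - X₄)` with `Δ = 2mα + α - m`. -/
noncomputable def Y3 (α m : ℝ) (f : ℝ → ℝ → ℝ → ℝ → ℝ) : ℝ → ℝ → ℝ → ℝ → ℝ :=
  fun x t u v => (m * α / (2 * m * α + α - m)) * (X3 α f x t u v - X4 m f x t u v)

/-- `Y₄ = -X₂`. -/
noncomputable def Y4 (α : ℝ) (f : ℝ → ℝ → ℝ → ℝ → ℝ) : ℝ → ℝ → ℝ → ℝ → ℝ :=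
  fun x t u v => -(X2 α f x t u v)

/-- Case 2.1 (`Δ = 2mα + α - m ≠ 0`): for every `C²` function `f` on `Ω = {t > 0}`,
`[Y₁,Y₂]f = Y₂f`, `[Y₃,Y₄]f = Y₄f`, and all other commutators among `Y₁,…,Y₄` vanish;
hence the Lie algebra spanned by `Y₁,…,Y₄` is the direct sum of the two-dimensional
non-abelian algebras `span{Y₁,Y₂}` and `span{Y₃,Y₄}`. -/
theorem commutators_case21 (α m : ℝ) (hα0 : 0 < α) (hα1 : α < 1) (hm : m ≠ 0)
    (hΔ : 2 * m * α + α - m ≠ 0)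
    (f : ℝ → ℝ → ℝ → ℝ → ℝ)
    (hf : ContDiffOn ℝ 2 (fun p : ℝ × ℝ × ℝ × ℝ => f p.1 p.2.1 p.2.2.1 p.2.2.2)
      {p : ℝ × ℝ × ℝ × ℝ | 0 < p.2.1}) :
    ∀ x t u v : ℝ, 0 < t →
      (Y1 α m (Y2 f) x t u v - Y2 (Y1 α m f) x t u v = Y2 f x t u v) ∧
      (Y3 α m (Y4 α f) x t u v - Y4 α (Y3 α m f) x t u v = Y4 α f x t u v) ∧
      (Y1 α m (Y3 α m f) x t u v - Y3 α m (Y1 α m f) x t u v = 0) ∧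
      (Y1 α m (Y4 α f) x t u v - Y4 α (Y1 α m f) x t u v = 0) ∧
      (Y2 (Y3 α m f) x t u v - Y3 α m (Y2 f) x t u v = 0) ∧
      (Y2 (Y4 α f) x t u v - Y4 α (Y2 f) x t u v = 0) := by
  intro x t u v ht
  have hS : IsOpen {p : E4 | 0 < p.2.1} := isOpen_lt continuous_const continuous_snd.fst
  have hf' : ContDiffOn ℝ 2 (FF f) {p : E4 | 0 < p.2.1} := hf
  have hFd : ∀ q : E4, 0 < q.2.1 → DifferentiableAt ℝ (FF f) q := fun q hq =>
    (hf'.differentiableOn (by norm_num)).differentiableAt (hS.mem_nhds hq)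
  have hgC : ContDiffOn ℝ 1 (GG f) {p : E4 | 0 < p.2.1} :=
    hf'.fderiv_of_isOpen hS (by norm_num)
  have hgd : DifferentiableAt ℝ (GG f) ((x, t, u, v) : E4) :=
    (hgC.differentiableOn one_ne_zero).differentiableAt (hS.mem_nhds ht)
  have hsym : ∀ w z : E4, BB f (x,t,u,v) w z = BB f (x,t,u,v) z w := fun w z =>
    ((hf'.contDiffAt (hS.mem_nhds ht)).isSymmSndFDerivAt minSmoothness_of_isRCLikeNormedField.le) w z
  have k1 : ∀ a b c d : ℝ, 0 < b → deriv (fun s => f s b c d) a = GG f (a,b,c,d) (1,0,0,0) :=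
    fun a b c d h => (pd1 (hFd (a,b,c,d) h)).deriv
  have k2 : ∀ a b c d : ℝ, 0 < b → deriv (fun s => f a s c d) b = GG f (a,b,c,d) (0,1,0,0) :=
    fun a b c d h => (pd2 (hFd (a,b,c,d) h)).deriv
  have k3 : ∀ a b c d : ℝ, 0 < b → deriv (fun s => f a b s d) c = GG f (a,b,c,d) (0,0,1,0) :=
    fun a b c d h => (pd3 (hFd (a,b,c,d) h)).deriv
  have k4 : ∀ a b c d : ℝ, 0 < b → deriv (fun s => f a b c s) d = GG f (a,b,c,d) (0,0,0,1) :=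
    fun a b c d h => (pd4 (hFd (a,b,c,d) h)).deriv
  have q1 : ∀ w : E4, HasDerivAt (fun s => GG f (s,t,u,v) w) (BB f (x,t,u,v) (1,0,0,0) w) x :=
    fun w => pdw1 w hgd
  have q2 : ∀ w : E4, HasDerivAt (fun s => GG f (x,s,u,v) w) (BB f (x,t,u,v) (0,1,0,0) w) t :=
    fun w => pdw2 w hgd
  have q3 : ∀ w : E4, HasDerivAt (fun s => GG f (x,t,s,v) w) (BB f (x,t,u,v) (0,0,1,0) w) u :=
    fun w => pdw3 w hgd
  have q4 : ∀ w : E4, HasDerivAt (fun s => GG f (x,t,u,s) w) (BB f (x,t,u,v) (0,0,0,1) w) v :=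
    fun w => pdw4 w hgd
  have oY1 : ∀ (φ : ℝ → ℝ → ℝ → ℝ → ℝ) (a b c d : ℝ), Y1 α m φ a b c d =
      -((m+1)*α/(2*m*α+α-m)) * (a * deriv (fun s => φ s b c d) a + (b/α) * deriv (fun s => φ a s c d) b)
      - (m*(α-1)/(2*m*α+α-m)) * (a * deriv (fun s => φ s b c d) a + (c/m) * deriv (fun s => φ a b s d) c
          + ((m+1)/m) * d * deriv (fun s => φ a b c s) d) := fun _ _ _ _ _ => rfl
  have oY2 : ∀ (φ : ℝ → ℝ → ℝ → ℝ → ℝ) (a b c d : ℝ), Y2 φ a b c d =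
      -(deriv (fun s => φ s b c d) a) := fun _ _ _ _ _ => rfl
  have oY3 : ∀ (φ : ℝ → ℝ → ℝ → ℝ → ℝ) (a b c d : ℝ), Y3 α m φ a b c d =
      (m*α/(2*m*α+α-m)) * ((a * deriv (fun s => φ s b c d) a + (b/α) * deriv (fun s => φ a s c d) b)
        - (a * deriv (fun s => φ s b c d) a + (c/m) * deriv (fun s => φ a b s d) c
          + ((m+1)/m) * d * deriv (fun s => φ a b c s) d)) := fun _ _ _ _ _ => rfl
  have oY4 : ∀ (φ : ℝ → ℝ → ℝ → ℝ → ℝ) (a b c d : ℝ), Y4 α φ a b c d =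
      -(b^(α-1) * deriv (fun s => φ a b c s) d) := fun _ _ _ _ _ => rfl
  have hY1q : ∀ a b c d : ℝ, 0 < b → Y1 α m f a b c d =
      -((m+1)*α/(2*m*α+α-m)) * (a * GG f (a,b,c,d) (1,0,0,0) + (b/α) * GG f (a,b,c,d) (0,1,0,0))
      - (m*(α-1)/(2*m*α+α-m)) * (a * GG f (a,b,c,d) (1,0,0,0) + (c/m) * GG f (a,b,c,d) (0,0,1,0)
          + ((m+1)/m) * d * GG f (a,b,c,d) (0,0,0,1)) := by
    intro a b c d h
    rw [oY1 f a b c d, k1 a b c d h, k2 a b c d h, k3 a b c d h, k4 a b c d h]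
  have hY2q : ∀ a b c d : ℝ, 0 < b → Y2 f a b c d = -(GG f (a,b,c,d) (1,0,0,0)) := by
    intro a b c d h
    rw [oY2 f a b c d, k1 a b c d h]
  have hY3q : ∀ a b c d : ℝ, 0 < b → Y3 α m f a b c d =
      (m*α/(2*m*α+α-m)) * ((a * GG f (a,b,c,d) (1,0,0,0) + (b/α) * GG f (a,b,c,d) (0,1,0,0))
        - (a * GG f (a,b,c,d) (1,0,0,0) + (c/m) * GG f (a,b,c,d) (0,0,1,0)
          + ((m+1)/m) * d * GG f (a,b,c,d) (0,0,0,1))) := by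
    intro a b c d h
    rw [oY3 f a b c d, k1 a b c d h, k2 a b c d h, k3 a b c d h, k4 a b c d h]
  have hY4q : ∀ a b c d : ℝ, 0 < b → Y4 α f a b c d = -(b^(α-1) * GG f (a,b,c,d) (0,0,0,1)) := by
    intro a b c d h
    rw [oY4 f a b c d, k4 a b c d h]
  have d1_1 : deriv (fun s => Y1 α m f s t u v) x = -((m+1)*α/(2*m*α+α-m)) * (GG f (x,t,u,v) (1,0,0,0) + x * BB f (x,t,u,v) (1,0,0,0) (1,0,0,0) + (t/α) * BB f (x,t,u,v) (1,0,0,0) (0,1,0,0)) - (m*(α-1)/(2*m*α+α-m)) * (GG f (x,t,u,v) (1,0,0,0) + x * BB f (x,t,u,v) (1,0,0,0) (1,0,0,0) + (u/m) * BB f (x,t,u,v) (1,0,0,0) (0,0,1,0) + ((m+1)/m) * v * BB f (x,t,u,v) (1,0,0,0) (0,0,0,1)) := by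
    have hfun : (fun s => Y1 α m f s t u v) = (fun s => -((m+1)*α/(2*m*α+α-m)) * (s * GG f (s,t,u,v) (1,0,0,0) + (t/α) * GG f (s,t,u,v) (0,1,0,0)) - (m*(α-1)/(2*m*α+α-m)) * (s * GG f (s,t,u,v) (1,0,0,0) + (u/m) * GG f (s,t,u,v) (0,0,1,0) + ((m+1)/m) * v * GG f (s,t,u,v) (0,0,0,1))) :=
      funext fun s => hY1q s t u v ht
    rw [hfun]
    exact ((((((hasDerivAt_id x).mul (q1 (1,0,0,0))).add ((q1 (0,1,0,0)).const_mul (t/α))).const_mul (-((m+1)*α/(2*m*α+α-m)))).sub (((((hasDerivAt_id x).mul (q1 (1,0,0,0))).add ((q1 (0,0,1,0)).const_mul (u/m))).add ((q1 (0,0,0,1)).const_mul ((m+1)/m * v))).const_mul ((m*(α-1)/(2*m*α+α-m))))).congr_deriv (by try simp only [id_eq]; try ring)).deriv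
  have d1_2 : deriv (fun s => Y1 α m f x s u v) t = -((m+1)*α/(2*m*α+α-m)) * (x * BB f (x,t,u,v) (0,1,0,0) (1,0,0,0) + (1/α) * GG f (x,t,u,v) (0,1,0,0) + (t/α) * BB f (x,t,u,v) (0,1,0,0) (0,1,0,0)) - (m*(α-1)/(2*m*α+α-m)) * (x * BB f (x,t,u,v) (0,1,0,0) (1,0,0,0) + (u/m) * BB f (x,t,u,v) (0,1,0,0) (0,0,1,0) + ((m+1)/m) * v * BB f (x,t,u,v) (0,1,0,0) (0,0,0,1)) := by
    have hfun : (fun s => Y1 α m f x s u v) =ᶠ[nhds t] (fun s => -((m+1)*α/(2*m*α+α-m)) * (x * GG f (x,s,u,v) (1,0,0,0) + (s/α) * GG f (x,s,u,v) (0,1,0,0)) - (m*(α-1)/(2*m*α+α-m)) * (x * GG f (x,s,u,v) (1,0,0,0) + (u/m) * GG f (x,s,u,v) (0,0,1,0) + ((m+1)/m) * v * GG f (x,s,u,v) (0,0,0,1))) := by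
      filter_upwards [Ioi_mem_nhds ht] with s hs using hY1q x s u v hs
    rw [hfun.deriv_eq]
    exact ((((((q2 (1,0,0,0)).const_mul x).add (((hasDerivAt_id t).div_const α).mul (q2 (0,1,0,0)))).const_mul (-((m+1)*α/(2*m*α+α-m)))).sub (((((q2 (1,0,0,0)).const_mul x).add ((q2 (0,0,1,0)).const_mul (u/m))).add ((q2 (0,0,0,1)).const_mul ((m+1)/m * v))).const_mul ((m*(α-1)/(2*m*α+α-m))))).congr_deriv (by try simp only [id_eq]; try ring)).deriv
  have d1_3 : deriv (fun s => Y1 α m f x t s v) u = -((m+1)*α/(2*m*α+α-m)) * (x * BB f (x,t,u,v) (0,0,1,0) (1,0,0,0) + (t/α) * BB f (x,t,u,v) (0,0,1,0) (0,1,0,0)) - (m*(α-1)/(2*m*α+α-m)) * (x * BB f (x,t,u,v) (0,0,1,0) (1,0,0,0) + (1/m) * GG f (x,t,u,v) (0,0,1,0) + (u/m) * BB f (x,t,u,v) (0,0,1,0) (0,0,1,0) + ((m+1)/m) * v * BB f (x,t,u,v) (0,0,1,0) (0,0,0,1)) := by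
    have hfun : (fun s => Y1 α m f x t s v) = (fun s => -((m+1)*α/(2*m*α+α-m)) * (x * GG f (x,t,s,v) (1,0,0,0) + (t/α) * GG f (x,t,s,v) (0,1,0,0)) - (m*(α-1)/(2*m*α+α-m)) * (x * GG f (x,t,s,v) (1,0,0,0) + (s/m) * GG f (x,t,s,v) (0,0,1,0) + ((m+1)/m) * v * GG f (x,t,s,v) (0,0,0,1))) :=
      funext fun s => hY1q x t s v ht
    rw [hfun]
    exact ((((((q3 (1,0,0,0)).const_mul x).add ((q3 (0,1,0,0)).const_mul (t/α))).const_mul (-((m+1)*α/(2*m*α+α-m)))).sub (((((q3 (1,0,0,0)).const_mul x).add (((hasDerivAt_id u).div_const m).mul (q3 (0,0,1,0)))).add ((q3 (0,0,0,1)).const_mul ((m+1)/m * v))).const_mul ((m*(α-1)/(2*m*α+α-m))))).congr_deriv (by try simp only [id_eq]; try ring)).deriv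
  have d1_4 : deriv (fun s => Y1 α m f x t u s) v = -((m+1)*α/(2*m*α+α-m)) * (x * BB f (x,t,u,v) (0,0,0,1) (1,0,0,0) + (t/α) * BB f (x,t,u,v) (0,0,0,1) (0,1,0,0)) - (m*(α-1)/(2*m*α+α-m)) * (x * BB f (x,t,u,v) (0,0,0,1) (1,0,0,0) + (u/m) * BB f (x,t,u,v) (0,0,0,1) (0,0,1,0) + ((m+1)/m) * GG f (x,t,u,v) (0,0,0,1) + ((m+1)/m) * v * BB f (x,t,u,v) (0,0,0,1) (0,0,0,1)) := by
    have hfun : (fun s => Y1 α m f x t u s) = (fun s => -((m+1)*α/(2*m*α+α-m)) * (x * GG f (x,t,u,s) (1,0,0,0) + (t/α) * GG f (x,t,u,s) (0,1,0,0)) - (m*(α-1)/(2*m*α+α-m)) * (x * GG f (x,t,u,s) (1,0,0,0) + (u/m) * GG f (x,t,u,s) (0,0,1,0) + ((m+1)/m) * s * GG f (x,t,u,s) (0,0,0,1))) :=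
      funext fun s => hY1q x t u s ht
    rw [hfun]
    exact ((((((q4 (1,0,0,0)).const_mul x).add ((q4 (0,1,0,0)).const_mul (t/α))).const_mul (-((m+1)*α/(2*m*α+α-m)))).sub (((((q4 (1,0,0,0)).const_mul x).add ((q4 (0,0,1,0)).const_mul (u/m))).add ((((hasDerivAt_id v).const_mul ((m+1)/m)).mul (q4 (0,0,0,1))))).const_mul ((m*(α-1)/(2*m*α+α-m))))).congr_deriv (by try simp only [id_eq]; try ring)).deriv
  have d2_1 : deriv (fun s => Y2 f s t u v) x = -(BB f (x,t,u,v) (1,0,0,0) (1,0,0,0)) := by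
    have hfun : (fun s => Y2 f s t u v) = (fun s => -(GG f (s,t,u,v) (1,0,0,0))) :=
      funext fun s => hY2q s t u v ht
    rw [hfun]
    exact (((q1 (1,0,0,0)).neg).congr_deriv (by try simp only [id_eq]; try ring)).deriv
  have d2_2 : deriv (fun s => Y2 f x s u v) t = -(BB f (x,t,u,v) (0,1,0,0) (1,0,0,0)) := by
    have hfun : (fun s => Y2 f x s u v) =ᶠ[nhds t] (fun s => -(GG f (x,s,u,v) (1,0,0,0))) := by
      filter_upwards [Ioi_mem_nhds ht] with s hs using hY2q x s u v hs
    rw [hfun.deriv_eq]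
    exact (((q2 (1,0,0,0)).neg).congr_deriv (by try simp only [id_eq]; try ring)).deriv
  have d2_3 : deriv (fun s => Y2 f x t s v) u = -(BB f (x,t,u,v) (0,0,1,0) (1,0,0,0)) := by
    have hfun : (fun s => Y2 f x t s v) = (fun s => -(GG f (x,t,s,v) (1,0,0,0))) :=
      funext fun s => hY2q x t s v ht
    rw [hfun]
    exact (((q3 (1,0,0,0)).neg).congr_deriv (by try simp only [id_eq]; try ring)).deriv
  have d2_4 : deriv (fun s => Y2 f x t u s) v = -(BB f (x,t,u,v) (0,0,0,1) (1,0,0,0)) := by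
    have hfun : (fun s => Y2 f x t u s) = (fun s => -(GG f (x,t,u,s) (1,0,0,0))) :=
      funext fun s => hY2q x t u s ht
    rw [hfun]
    exact (((q4 (1,0,0,0)).neg).congr_deriv (by try simp only [id_eq]; try ring)).deriv
  have d3_1 : deriv (fun s => Y3 α m f s t u v) x = (m*α/(2*m*α+α-m)) * ((GG f (x,t,u,v) (1,0,0,0) + x * BB f (x,t,u,v) (1,0,0,0) (1,0,0,0) + (t/α) * BB f (x,t,u,v) (1,0,0,0) (0,1,0,0)) - (GG f (x,t,u,v) (1,0,0,0) + x * BB f (x,t,u,v) (1,0,0,0) (1,0,0,0) + (u/m) * BB f (x,t,u,v) (1,0,0,0) (0,0,1,0) + ((m+1)/m) * v * BB f (x,t,u,v) (1,0,0,0) (0,0,0,1))) := by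
    have hfun : (fun s => Y3 α m f s t u v) = (fun s => (m*α/(2*m*α+α-m)) * ((s * GG f (s,t,u,v) (1,0,0,0) + (t/α) * GG f (s,t,u,v) (0,1,0,0)) - (s * GG f (s,t,u,v) (1,0,0,0) + (u/m) * GG f (s,t,u,v) (0,0,1,0) + ((m+1)/m) * v * GG f (s,t,u,v) (0,0,0,1)))) :=
      funext fun s => hY3q s t u v ht
    rw [hfun]
    exact ((((((hasDerivAt_id x).mul (q1 (1,0,0,0))).add ((q1 (0,1,0,0)).const_mul (t/α))).sub ((((hasDerivAt_id x).mul (q1 (1,0,0,0))).add ((q1 (0,0,1,0)).const_mul (u/m))).add ((q1 (0,0,0,1)).const_mul ((m+1)/m * v)))).const_mul (m*α/(2*m*α+α-m))).congr_deriv (by try simp only [id_eq]; try ring)).deriv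
  have d3_2 : deriv (fun s => Y3 α m f x s u v) t = (m*α/(2*m*α+α-m)) * ((x * BB f (x,t,u,v) (0,1,0,0) (1,0,0,0) + (1/α) * GG f (x,t,u,v) (0,1,0,0) + (t/α) * BB f (x,t,u,v) (0,1,0,0) (0,1,0,0)) - (x * BB f (x,t,u,v) (0,1,0,0) (1,0,0,0) + (u/m) * BB f (x,t,u,v) (0,1,0,0) (0,0,1,0) + ((m+1)/m) * v * BB f (x,t,u,v) (0,1,0,0) (0,0,0,1))) := by
    have hfun : (fun s => Y3 α m f x s u v) =ᶠ[nhds t] (fun s => (m*α/(2*m*α+α-m)) * ((x * GG f (x,s,u,v) (1,0,0,0) + (s/α) * GG f (x,s,u,v) (0,1,0,0)) - (x * GG f (x,s,u,v) (1,0,0,0) + (u/m) * GG f (x,s,u,v) (0,0,1,0) + ((m+1)/m) * v * GG f (x,s,u,v) (0,0,0,1)))) := by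
      filter_upwards [Ioi_mem_nhds ht] with s hs using hY3q x s u v hs
    rw [hfun.deriv_eq]
    exact ((((((q2 (1,0,0,0)).const_mul x).add (((hasDerivAt_id t).div_const α).mul (q2 (0,1,0,0)))).sub ((((q2 (1,0,0,0)).const_mul x).add ((q2 (0,0,1,0)).const_mul (u/m))).add ((q2 (0,0,0,1)).const_mul ((m+1)/m * v)))).const_mul (m*α/(2*m*α+α-m))).congr_deriv (by try simp only [id_eq]; try ring)).deriv
  have d3_3 : deriv (fun s => Y3 α m f x t s v) u = (m*α/(2*m*α+α-m)) * ((x * BB f (x,t,u,v) (0,0,1,0) (1,0,0,0) + (t/α) * BB f (x,t,u,v) (0,0,1,0) (0,1,0,0)) - (x * BB f (x,t,u,v) (0,0,1,0) (1,0,0,0) + (1/m) * GG f (x,t,u,v) (0,0,1,0) + (u/m) * BB f (x,t,u,v) (0,0,1,0) (0,0,1,0) + ((m+1)/m) * v * BB f (x,t,u,v) (0,0,1,0) (0,0,0,1))) := by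
    have hfun : (fun s => Y3 α m f x t s v) = (fun s => (m*α/(2*m*α+α-m)) * ((x * GG f (x,t,s,v) (1,0,0,0) + (t/α) * GG f (x,t,s,v) (0,1,0,0)) - (x * GG f (x,t,s,v) (1,0,0,0) + (s/m) * GG f (x,t,s,v) (0,0,1,0) + ((m+1)/m) * v * GG f (x,t,s,v) (0,0,0,1)))) :=
      funext fun s => hY3q x t s v ht
    rw [hfun]
    exact ((((((q3 (1,0,0,0)).const_mul x).add ((q3 (0,1,0,0)).const_mul (t/α))).sub ((((q3 (1,0,0,0)).const_mul x).add (((hasDerivAt_id u).div_const m).mul (q3 (0,0,1,0)))).add ((q3 (0,0,0,1)).const_mul ((m+1)/m * v)))).const_mul (m*α/(2*m*α+α-m))).congr_deriv (by try simp only [id_eq]; try ring)).deriv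
  have d3_4 : deriv (fun s => Y3 α m f x t u s) v = (m*α/(2*m*α+α-m)) * ((x * BB f (x,t,u,v) (0,0,0,1) (1,0,0,0) + (t/α) * BB f (x,t,u,v) (0,0,0,1) (0,1,0,0)) - (x * BB f (x,t,u,v) (0,0,0,1) (1,0,0,0) + (u/m) * BB f (x,t,u,v) (0,0,0,1) (0,0,1,0) + ((m+1)/m) * GG f (x,t,u,v) (0,0,0,1) + ((m+1)/m) * v * BB f (x,t,u,v) (0,0,0,1) (0,0,0,1))) := by
    have hfun : (fun s => Y3 α m f x t u s) = (fun s => (m*α/(2*m*α+α-m)) * ((x * GG f (x,t,u,s) (1,0,0,0) + (t/α) * GG f (x,t,u,s) (0,1,0,0)) - (x * GG f (x,t,u,s) (1,0,0,0) + (u/m) * GG f (x,t,u,s) (0,0,1,0) + ((m+1)/m) * s * GG f (x,t,u,s) (0,0,0,1)))) :=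
      funext fun s => hY3q x t u s ht
    rw [hfun]
    exact ((((((q4 (1,0,0,0)).const_mul x).add ((q4 (0,1,0,0)).const_mul (t/α))).sub ((((q4 (1,0,0,0)).const_mul x).add ((q4 (0,0,1,0)).const_mul (u/m))).add ((((hasDerivAt_id v).const_mul ((m+1)/m)).mul (q4 (0,0,0,1)))))).const_mul (m*α/(2*m*α+α-m))).congr_deriv (by try simp only [id_eq]; try ring)).deriv
  have d4_1 : deriv (fun s => Y4 α f s t u v) x = -(t^(α-1) * BB f (x,t,u,v) (1,0,0,0) (0,0,0,1)) := by
    have hfun : (fun s => Y4 α f s t u v) = (fun s => -(t^(α-1) * GG f (s,t,u,v) (0,0,0,1))) :=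
      funext fun s => hY4q s t u v ht
    rw [hfun]
    exact ((((q1 (0,0,0,1)).const_mul (t^(α-1))).neg).congr_deriv (by try simp only [id_eq]; try ring)).deriv
  have d4_2 : deriv (fun s => Y4 α f x s u v) t = -((α-1) * t^(α-1-1) * GG f (x,t,u,v) (0,0,0,1) + t^(α-1) * BB f (x,t,u,v) (0,1,0,0) (0,0,0,1)) := by
    have hfun : (fun s => Y4 α f x s u v) =ᶠ[nhds t] (fun s => -(s^(α-1) * GG f (x,s,u,v) (0,0,0,1))) := by
      filter_upwards [Ioi_mem_nhds ht] with s hs using hY4q x s u v hs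
    rw [hfun.deriv_eq]
    exact ((((Real.hasDerivAt_rpow_const (p := α - 1) (Or.inl (ne_of_gt ht))).mul (q2 (0,0,0,1))).neg).congr_deriv (by try simp only [id_eq]; try ring)).deriv
  have d4_3 : deriv (fun s => Y4 α f x t s v) u = -(t^(α-1) * BB f (x,t,u,v) (0,0,1,0) (0,0,0,1)) := by
    have hfun : (fun s => Y4 α f x t s v) = (fun s => -(t^(α-1) * GG f (x,t,s,v) (0,0,0,1))) :=
      funext fun s => hY4q x t s v ht
    rw [hfun]
    exact ((((q3 (0,0,0,1)).const_mul (t^(α-1))).neg).congr_deriv (by try simp only [id_eq]; try ring)).deriv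
  have d4_4 : deriv (fun s => Y4 α f x t u s) v = -(t^(α-1) * BB f (x,t,u,v) (0,0,0,1) (0,0,0,1)) := by
    have hfun : (fun s => Y4 α f x t u s) = (fun s => -(t^(α-1) * GG f (x,t,u,s) (0,0,0,1))) :=
      funext fun s => hY4q x t u s ht
    rw [hfun]
    exact ((((q4 (0,0,0,1)).const_mul (t^(α-1))).neg).congr_deriv (by try simp only [id_eq]; try ring)).deriv

  have hTT : t ^ (α - 1 - 1) = t ^ (α - 1) / t := by
    rw [eq_div_iff (ne_of_gt ht), ← Real.rpow_add_one (ne_of_gt ht)]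
    norm_num
  refine ⟨?_, ?_, ?_, ?_, ?_, ?_⟩
  · rw [oY1 (Y2 f) x t u v, oY2 (Y1 α m f) x t u v, oY2 f x t u v,
      d2_1, d2_2, d2_3, d2_4, d1_1, k1 x t u v ht]
    rw [hsym (0,1,0,0) (1,0,0,0), hsym (0,0,1,0) (1,0,0,0), hsym (0,0,0,1) (1,0,0,0)]
    generalize hg0 : GG f (x,t,u,v) (1,0,0,0) = A1, hg1 : GG f (x,t,u,v) (0,1,0,0) = A2, hg2 : GG f (x,t,u,v) (0,0,1,0) = A3, hg3 : GG f (x,t,u,v) (0,0,0,1) = A4, hg4 : BB f (x,t,u,v) (1,0,0,0) (1,0,0,0) = B11, hg5 : BB f (x,t,u,v) (1,0,0,0) (0,1,0,0) = B12, hg6 : BB f (x,t,u,v) (1,0,0,0) (0,0,1,0) = B13, hg7 : BB f (x,t,u,v) (1,0,0,0) (0,0,0,1) = B14, hg8 : BB f (x,t,u,v) (0,1,0,0) (0,1,0,0) = B22, hg9 : BB f (x,t,u,v) (0,1,0,0) (0,0,1,0) = B23, hg10 : BB f (x,t,u,v) (0,1,0,0) (0,0,0,1) = B24, hg11 : BB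 f (x,t,u,v) (0,0,1,0) (0,0,1,0) = B33, hg12 : BB f (x,t,u,v) (0,0,1,0) (0,0,0,1) = B34, hg13 : BB f (x,t,u,v) (0,0,0,1) (0,0,0,1) = B44, hg14 : t^(α-1) = T
    have hab : -((m+1)*α/(2*m*α+α-m)) - m*(α-1)/(2*m*α+α-m) = -1 := by
      field_simp
      rw [div_eq_iff (by intro h; apply hΔ; linarith)]
      ring
    linear_combination A1 * hab
  · rw [oY3 (Y4 α f) x t u v, oY4 (Y3 α m f) x t u v, oY4 f x t u v,
      d4_1, d4_2, d4_3, d4_4, d3_4, k4 x t u v ht, hTT]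
    rw [hsym (0,0,0,1) (1,0,0,0), hsym (0,0,0,1) (0,1,0,0), hsym (0,0,0,1) (0,0,1,0)]
    generalize hg0 : GG f (x,t,u,v) (1,0,0,0) = A1, hg1 : GG f (x,t,u,v) (0,1,0,0) = A2, hg2 : GG f (x,t,u,v) (0,0,1,0) = A3, hg3 : GG f (x,t,u,v) (0,0,0,1) = A4, hg4 : BB f (x,t,u,v) (1,0,0,0) (1,0,0,0) = B11, hg5 : BB f (x,t,u,v) (1,0,0,0) (0,1,0,0) = B12, hg6 : BB f (x,t,u,v) (1,0,0,0) (0,0,1,0) = B13, hg7 : BB f (x,t,u,v) (1,0,0,0) (0,0,0,1) = B14, hg8 : BB f (x,t,u,v) (0,1,0,0) (0,1,0,0) = B22, hg9 : BB f (x,t,u,v) (0,1,0,0) (0,0,1,0) = B23, hg10 : BB f (x,t,u,v) (0,1,0,0) (0,0,0,1) = B24, hg11 : BB f (x,t,u,v) (0,0,1,0) (0,0,1,0) = B33, hg12 : BB f (x,t,u,v) (0,0,1,0) (0,0,0,1) = B34, hg13 : BB f (x,t,u,v) (0,0,0,1) (0,0,0,1) = B44, hg14 : t^(α-1) = T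
    have hco2 : (m*α/(2*m*α+α-m)) * ((t/α) * ((α-1) * (T/t)) + T * ((m+1)/m)) = T := by
      field_simp
      rw [div_eq_iff (by intro h; apply hΔ; linarith)]
      ring
    linear_combination (-A4) * hco2
  · rw [oY1 (Y3 α m f) x t u v, oY3 (Y1 α m f) x t u v,
      d3_1, d3_2, d3_3, d3_4, d1_1, d1_2, d1_3, d1_4]
    rw [hsym (0,1,0,0) (1,0,0,0), hsym (0,0,1,0) (1,0,0,0), hsym (0,0,0,1) (1,0,0,0), hsym (0,0,1,0) (0,1,0,0), hsym (0,0,0,1) (0,1,0,0), hsym (0,0,0,1) (0,0,1,0)]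
    generalize hg0 : GG f (x,t,u,v) (1,0,0,0) = A1, hg1 : GG f (x,t,u,v) (0,1,0,0) = A2, hg2 : GG f (x,t,u,v) (0,0,1,0) = A3, hg3 : GG f (x,t,u,v) (0,0,0,1) = A4, hg4 : BB f (x,t,u,v) (1,0,0,0) (1,0,0,0) = B11, hg5 : BB f (x,t,u,v) (1,0,0,0) (0,1,0,0) = B12, hg6 : BB f (x,t,u,v) (1,0,0,0) (0,0,1,0) = B13, hg7 : BB f (x,t,u,v) (1,0,0,0) (0,0,0,1) = B14, hg8 : BB f (x,t,u,v) (0,1,0,0) (0,1,0,0) = B22, hg9 : BB f (x,t,u,v) (0,1,0,0) (0,0,1,0) = B23, hg10 : BB f (x,t,u,v) (0,1,0,0) (0,0,0,1) = B24, hg11 : BB f (x,t,u,v) (0,0,1,0) (0,0,1,0) = B33, hg12 : BB f (x,t,u,v) (0,0,1,0) (0,0,0,1) = B34, hg13 : BB f (x,t,u,v) (0,0,0,1) (0,0,0,1) = B44, hg14 : t^(α-1) = T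
    ring
  · rw [oY1 (Y4 α f) x t u v, oY4 (Y1 α m f) x t u v,
      d4_1, d4_2, d4_3, d4_4, d1_4, hTT]
    rw [hsym (0,0,0,1) (1,0,0,0), hsym (0,0,0,1) (0,1,0,0), hsym (0,0,0,1) (0,0,1,0)]
    generalize hg0 : GG f (x,t,u,v) (1,0,0,0) = A1, hg1 : GG f (x,t,u,v) (0,1,0,0) = A2, hg2 : GG f (x,t,u,v) (0,0,1,0) = A3, hg3 : GG f (x,t,u,v) (0,0,0,1) = A4, hg4 : BB f (x,t,u,v) (1,0,0,0) (1,0,0,0) = B11, hg5 : BB f (x,t,u,v) (1,0,0,0) (0,1,0,0) = B12, hg6 : BB f (x,t,u,v) (1,0,0,0) (0,0,1,0) = B13, hg7 : BB f (x,t,u,v) (1,0,0,0) (0,0,0,1) = B14, hg8 : BB f (x,t,u,v) (0,1,0,0) (0,1,0,0) = B22, hg9 : BB f (x,t,u,v) (0,1,0,0) (0,0,1,0) = B23, hg10 : BB f (x,t,u,v) (0,1,0,0) (0,0,0,1) = B24, hg11 : BB f (x,t,u,v) (0,0,1,0) (0,0,1,0) = B33, hg12 : BB f (x,t,u,v) (0,0,1,0)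 (0,0,0,1) = B34, hg13 : BB f (x,t,u,v) (0,0,0,1) (0,0,0,1) = B44, hg14 : t^(α-1) = T
    have hco4 : ((m+1)*α/(2*m*α+α-m)) * ((t/α) * ((α-1) * (T/t))) = m*(α-1)/(2*m*α+α-m) * (T * ((m+1)/m)) := by
      field_simp
    linear_combination A4 * hco4
  · rw [oY2 (Y3 α m f) x t u v, oY3 (Y2 f) x t u v,
      d3_1, d2_1, d2_2, d2_3, d2_4]
    rw [hsym (0,1,0,0) (1,0,0,0), hsym (0,0,1,0) (1,0,0,0), hsym (0,0,0,1) (1,0,0,0)]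
    generalize hg0 : GG f (x,t,u,v) (1,0,0,0) = A1, hg1 : GG f (x,t,u,v) (0,1,0,0) = A2, hg2 : GG f (x,t,u,v) (0,0,1,0) = A3, hg3 : GG f (x,t,u,v) (0,0,0,1) = A4, hg4 : BB f (x,t,u,v) (1,0,0,0) (1,0,0,0) = B11, hg5 : BB f (x,t,u,v) (1,0,0,0) (0,1,0,0) = B12, hg6 : BB f (x,t,u,v) (1,0,0,0) (0,0,1,0) = B13, hg7 : BB f (x,t,u,v) (1,0,0,0) (0,0,0,1) = B14, hg8 : BB f (x,t,u,v) (0,1,0,0) (0,1,0,0) = B22, hg9 : BB f (x,t,u,v) (0,1,0,0) (0,0,1,0) = B23, hg10 : BB f (x,t,u,v) (0,1,0,0) (0,0,0,1) = B24, hg11 : BB f (x,t,u,v) (0,0,1,0) (0,0,1,0) = B33, hg12 : BB f (x,t,u,v) (0,0,1,0) (0,0,0,1) = B34, hg13 : BB f (x,t,u,v) (0,0,0,1) (0,0,0,1) = B44, hg14 : t^(α-1) = T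
    ring
  · rw [oY2 (Y4 α f) x t u v, oY4 (Y2 f) x t u v, d4_1, d2_4]
    rw [hsym (0,0,0,1) (1,0,0,0)]
    generalize hg0 : GG f (x,t,u,v) (1,0,0,0) = A1, hg1 : GG f (x,t,u,v) (0,1,0,0) = A2, hg2 : GG f (x,t,u,v) (0,0,1,0) = A3, hg3 : GG f (x,t,u,v) (0,0,0,1) = A4, hg4 : BB f (x,t,u,v) (1,0,0,0) (1,0,0,0) = B11, hg5 : BB f (x,t,u,v) (1,0,0,0) (0,1,0,0) = B12, hg6 : BB f (x,t,u,v) (1,0,0,0) (0,0,1,0) = B13, hg7 : BB f (x,t,u,v) (1,0,0,0) (0,0,0,1) = B14, hg8 : BB f (x,t,u,v) (0,1,0,0) (0,1,0,0) = B22, hg9 : BB f (x,t,u,v) (0,1,0,0) (0,0,1,0) = B23, hg10 : BB f (x,t,u,v) (0,1,0,0) (0,0,0,1) = B24, hg11 : BB f (x,t,u,v) (0,0,1,0) (0,0,1,0) = B33, hg12 : BB f (x,t,u,v) (0,0,1,0) (0,0,0,1) = B34, hg13 : BB f (x,t,u,v) (0,0,0,1) (0,0,0,1) = B44, hg14 :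 t^(α-1) = T
    ring
end

section
/- Let 0<α<1, let b:ℝ→ℝ be any function, and let a, c₁, c₂ be real constants. Then the pair u(x,t) = a·(Γ(α)/Γ(2α))·t^{2α−1} + c₁·t^{α−1}, v(x,t) = (c₂ + a·x)·t^{α−1} solves system (1) for all x∈ℝ and t>0; explicitly, D^α_t u(x,t) = a·t^{α−1} = ∂v/∂x and D^α_t v(x,t) = 0 = b(u(x,t))²·∂u/∂x. -/
open MeasureTheory intervalIntegral Set

lemma ofReal_betaFun {β γ : ℝ} {x : ℝ} (h0 : 0 ≤ x) (h1 : x ≤ 1) :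
    ((x ^ (β - 1) * (1 - x) ^ (γ - 1) : ℝ) : ℂ)
      = (x : ℂ) ^ ((β : ℂ) - 1) * (1 - (x : ℂ)) ^ ((γ : ℂ) - 1) := by
  rw [Complex.ofReal_mul, Complex.ofReal_cpow h0, Complex.ofReal_cpow (by linarith)]
  push_cast
  ring_nf

lemma betaInt_integrable {β γ : ℝ} (hβ : 0 < β) (hγ : 0 < γ) :
    IntervalIntegrable (fun x : ℝ => x ^ (β - 1) * (1 - x) ^ (γ - 1)) volume 0 1 := by
  have h := Complex.betaIntegral_convergent (u := (β : ℂ)) (v := (γ : ℂ))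
    (by simpa using hβ) (by simpa using hγ)
  rw [intervalIntegrable_iff_integrableOn_Ioc_of_le zero_le_one] at h ⊢
  have h2 : IntegrableOn (fun x : ℝ => ((x ^ (β - 1) * (1 - x) ^ (γ - 1) : ℝ) : ℂ))
      (Set.Ioc (0:ℝ) 1) volume := by
    refine h.congr_fun (fun x hx => ?_) measurableSet_Ioc
    exact (ofReal_betaFun hx.1.le hx.2).symm
  exact (by simpa [RCLike.re_to_complex] using h2.re :
    Integrable (fun x : ℝ => x ^ (β - 1) * (1 - x) ^ (γ - 1)) (volume.restrict (Ioc 0 1)))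

lemma betaInt_value {β γ : ℝ} (hβ : 0 < β) (hγ : 0 < γ) :
    ∫ x in (0:ℝ)..1, x ^ (β - 1) * (1 - x) ^ (γ - 1)
      = Real.Gamma β * Real.Gamma γ / Real.Gamma (β + γ) := by
  have key : Complex.betaIntegral (β : ℂ) (γ : ℂ)
      = ((∫ x in (0:ℝ)..1, x ^ (β - 1) * (1 - x) ^ (γ - 1) : ℝ) : ℂ) := by
    rw [Complex.betaIntegral, ← intervalIntegral.integral_ofReal]
    apply intervalIntegral.integral_congr
    intro x hx
    rw [Set.uIcc_of_le zero_le_one] at hx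
    exact (ofReal_betaFun hx.1 hx.2).symm
  have hg := Complex.Gamma_mul_Gamma_eq_betaIntegral
    (s := (β : ℂ)) (t := (γ : ℂ)) (by simpa using hβ) (by simpa using hγ)
  rw [key, Complex.Gamma_ofReal, Complex.Gamma_ofReal, ← Complex.ofReal_add,
    Complex.Gamma_ofReal, ← Complex.ofReal_mul, ← Complex.ofReal_mul] at hg
  have hg' := Complex.ofReal_injective hg
  have hne : Real.Gamma (β + γ) ≠ 0 := (Real.Gamma_pos_of_pos (by linarith)).ne'
  field_simp
  linarith [hg']

lemma scaled_eq {β γ τ : ℝ} (hτ : 0 < τ) {x : ℝ} (h0 : 0 ≤ x) (h1 : x ≤ τ) :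
    x ^ (β - 1) * (τ - x) ^ (γ - 1)
      = (τ ^ (β - 1) * τ ^ (γ - 1)) * ((τ⁻¹ * x) ^ (β - 1) * (1 - τ⁻¹ * x) ^ (γ - 1)) := by
  have e1 : (τ⁻¹ * x) ^ (β - 1) = τ⁻¹ ^ (β - 1) * x ^ (β - 1) :=
    Real.mul_rpow (by positivity) h0
  have e2 : (1 - τ⁻¹ * x) = τ⁻¹ * (τ - x) := by field_simp
  have e3 : (τ⁻¹ * (τ - x)) ^ (γ - 1) = τ⁻¹ ^ (γ - 1) * (τ - x) ^ (γ - 1) :=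
    Real.mul_rpow (by positivity) (by linarith)
  have e4 : τ ^ (β - 1) * τ⁻¹ ^ (β - 1) = 1 := by
    rw [← Real.mul_rpow hτ.le (by positivity), mul_inv_cancel₀ hτ.ne', Real.one_rpow]
  have e5 : τ ^ (γ - 1) * τ⁻¹ ^ (γ - 1) = 1 := by
    rw [← Real.mul_rpow hτ.le (by positivity), mul_inv_cancel₀ hτ.ne', Real.one_rpow]
  rw [e1, e2, e3]
  rw [show τ ^ (β - 1) * τ ^ (γ - 1) *
      (τ⁻¹ ^ (β - 1) * x ^ (β - 1) * (τ⁻¹ ^ (γ - 1) * (τ - x) ^ (γ - 1)))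
      = (τ ^ (β - 1) * τ⁻¹ ^ (β - 1)) * ((τ ^ (γ - 1) * τ⁻¹ ^ (γ - 1))
        * (x ^ (β - 1) * (τ - x) ^ (γ - 1))) from by ring, e4, e5]
  ring

lemma scaled_integrable {β γ : ℝ} (hβ : 0 < β) (hγ : 0 < γ) {τ : ℝ} (hτ : 0 < τ) :
    IntervalIntegrable (fun s : ℝ => s ^ (β - 1) * (τ - s) ^ (γ - 1)) volume 0 τ := by
  have h := ((betaInt_integrable hβ hγ).comp_mul_left (c := τ⁻¹)).const_mul
    (τ ^ (β - 1) * τ ^ (γ - 1))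
  rw [zero_div, one_div, inv_inv] at h
  rw [intervalIntegrable_iff_integrableOn_Ioc_of_le hτ.le] at h ⊢
  refine h.congr_fun (fun x hx => ?_) measurableSet_Ioc
  exact (scaled_eq hτ hx.1.le hx.2).symm

lemma scaled_value {β γ : ℝ} (hβ : 0 < β) (hγ : 0 < γ) {τ : ℝ} (hτ : 0 < τ) :
    ∫ s in (0:ℝ)..τ, s ^ (β - 1) * (τ - s) ^ (γ - 1)
      = τ ^ (β + γ - 1) * (Real.Gamma β * Real.Gamma γ / Real.Gamma (β + γ)) := by
  have hs := intervalIntegral.smul_integral_comp_mul_left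
    (f := fun s : ℝ => s ^ (β - 1) * (τ - s) ^ (γ - 1)) (a := 0) (b := 1) τ
  rw [mul_zero, mul_one] at hs
  rw [← hs]
  have key : ∫ x in (0:ℝ)..1, (τ * x) ^ (β - 1) * (τ - τ * x) ^ (γ - 1)
      = (τ ^ (β - 1) * τ ^ (γ - 1)) * ∫ x in (0:ℝ)..1, x ^ (β - 1) * (1 - x) ^ (γ - 1) := by
    rw [← intervalIntegral.integral_const_mul]
    apply intervalIntegral.integral_congr
    intro x hx
    rw [Set.uIcc_of_le zero_le_one] at hx
    have hxx : τ⁻¹ * (τ * x) = x := by field_simp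
    have h2 := scaled_eq (β := β) (γ := γ) hτ (x := τ * x)
      (mul_nonneg hτ.le hx.1) (by nlinarith [hx.2])
    rw [hxx] at h2
    show (τ * x) ^ (β - 1) * (τ - τ * x) ^ (γ - 1)
      = τ ^ (β - 1) * τ ^ (γ - 1) * (x ^ (β - 1) * (1 - x) ^ (γ - 1))
    exact h2
  rw [key, betaInt_value hβ hγ, smul_eq_mul, ← mul_assoc,
    show τ * (τ ^ (β - 1) * τ ^ (γ - 1)) = τ ^ (β + γ - 1) from by
      rw [show β + γ - 1 = 1 + ((β - 1) + (γ - 1)) by ring, Real.rpow_add hτ,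
        Real.rpow_add hτ, Real.rpow_one]]

lemma F_eval {α : ℝ} (hα0 : 0 < α) (hα1 : α < 1) (C₁ C₂ : ℝ) {τ : ℝ} (hτ : 0 < τ) :
    ∫ s in (0:ℝ)..τ, (C₁ * s ^ (2 * α - 1) + C₂ * s ^ (α - 1)) * (τ - s) ^ (-α)
      = C₁ * (Real.Gamma (2 * α) * Real.Gamma (1 - α) / Real.Gamma (α + 1)) * τ ^ α
        + C₂ * (Real.Gamma α * Real.Gamma (1 - α)) := by
  have h1 : IntervalIntegrable (fun s : ℝ => s ^ (2 * α - 1) * (τ - s) ^ ((1 - α) - 1))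
      volume 0 τ := scaled_integrable (by linarith) (by linarith) hτ
  have h2 : IntervalIntegrable (fun s : ℝ => s ^ (α - 1) * (τ - s) ^ ((1 - α) - 1))
      volume 0 τ := scaled_integrable (by linarith) (by linarith) hτ
  have hcong : ∫ s in (0:ℝ)..τ, (C₁ * s ^ (2 * α - 1) + C₂ * s ^ (α - 1)) * (τ - s) ^ (-α)
      = ∫ s in (0:ℝ)..τ, (C₁ * (s ^ (2 * α - 1) * (τ - s) ^ ((1 - α) - 1))
          + C₂ * (s ^ (α - 1) * (τ - s) ^ ((1 - α) - 1))) := by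
    apply intervalIntegral.integral_congr
    intro s _
    rw [show (1 - α) - 1 = -α by ring]
    ring
  rw [hcong, intervalIntegral.integral_add (h1.const_mul C₁) (h2.const_mul C₂),
    intervalIntegral.integral_const_mul, intervalIntegral.integral_const_mul,
    scaled_value (by linarith) (by linarith) hτ,
    scaled_value (by linarith) (by linarith) hτ]
  rw [show 2 * α + (1 - α) - 1 = α by ring, show 2 * α + (1 - α) = α + 1 by ring,
    show α + (1 - α) - 1 = (0:ℝ) by ring, show α + (1 - α) = (1:ℝ) by ring,
    Real.rpow_zero, Real.Gamma_one]
  ring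

lemma RL_eval {α : ℝ} (hα0 : 0 < α) (hα1 : α < 1) (C₁ C₂ : ℝ) (f : ℝ → ℝ)
    (hf : ∀ s : ℝ, f s = C₁ * s ^ (2 * α - 1) + C₂ * s ^ (α - 1)) {t : ℝ} (ht : 0 < t) :
    RLderiv α f t = (1 / Real.Gamma (1 - α)) *
      (C₁ * (Real.Gamma (2 * α) * Real.Gamma (1 - α) / Real.Gamma (α + 1))
        * (α * t ^ (α - 1))) := by
  unfold RLderiv
  congr 1
  have hev : (fun τ : ℝ => ∫ s in (0:ℝ)..τ, f s * (τ - s) ^ (-α))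
      =ᶠ[nhds t] (fun τ : ℝ =>
        C₁ * (Real.Gamma (2 * α) * Real.Gamma (1 - α) / Real.Gamma (α + 1)) * τ ^ α
          + C₂ * (Real.Gamma α * Real.Gamma (1 - α))) := by
    filter_upwards [Ioi_mem_nhds ht] with τ hτ
    simp only [hf]
    exact F_eval hα0 hα1 C₁ C₂ hτ
  rw [hev.deriv_eq]
  have hd : HasDerivAt (fun τ : ℝ =>
      C₁ * (Real.Gamma (2 * α) * Real.Gamma (1 - α) / Real.Gamma (α + 1)) * τ ^ α
        + C₂ * (Real.Gamma α * Real.Gamma (1 - α)))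
      (C₁ * (Real.Gamma (2 * α) * Real.Gamma (1 - α) / Real.Gamma (α + 1))
        * (α * t ^ (α - 1))) t :=
    ((Real.hasDerivAt_rpow_const (Or.inl ht.ne')).const_mul _).add_const _
  exact hd.deriv

/-- The pair `u(x,t) = a·(Γ(α)/Γ(2α))·t^(2α-1) + c₁·t^(α-1)`,
`v(x,t) = (c₂ + a·x)·t^(α-1)` solves system (1) for any `b`; explicitly
`D^α_t u = a·t^(α-1) = v_x` and `D^α_t v = 0 = b(u)²·u_x`. -/
theorem invariant_solution_U1 (α : ℝ) (hα0 : 0 < α) (hα1 : α < 1)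
    (b : ℝ → ℝ) (a c₁ c₂ : ℝ)
    (u v : ℝ → ℝ → ℝ)
    (hu : ∀ x t : ℝ, u x t =
      a * (Real.Gamma α / Real.Gamma (2 * α)) * t ^ (2 * α - 1) + c₁ * t ^ (α - 1))
    (hv : ∀ x t : ℝ, v x t = (c₂ + a * x) * t ^ (α - 1)) :
    ∀ x : ℝ, ∀ t : ℝ, 0 < t →
      RLderiv α (u x) t = a * t ^ (α - 1) ∧
      a * t ^ (α - 1) = deriv (fun x' => v x' t) x ∧
      RLderiv α (v x) t = 0 ∧
      (0 : ℝ) = (b (u x t)) ^ 2 * deriv (fun x' => u x' t) x := by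
  intro x t ht
  have hΓα : 0 < Real.Gamma α := Real.Gamma_pos_of_pos hα0
  have hΓ2α : 0 < Real.Gamma (2 * α) := Real.Gamma_pos_of_pos (by linarith)
  have hΓ1α : 0 < Real.Gamma (1 - α) := Real.Gamma_pos_of_pos (by linarith)
  have hΓα1 : Real.Gamma (α + 1) = α * Real.Gamma α := Real.Gamma_add_one hα0.ne'
  have hΓα1pos : 0 < Real.Gamma (α + 1) := Real.Gamma_pos_of_pos (by linarith)
  refine ⟨?_, ?_, ?_, ?_⟩
  · rw [RL_eval hα0 hα1 (a * (Real.Gamma α / Real.Gamma (2 * α))) c₁ (u x)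
      (fun s => hu x s) ht, hΓα1]
    field_simp
  · have hd : HasDerivAt (fun x' : ℝ => (c₂ + a * x') * t ^ (α - 1))
        (a * t ^ (α - 1)) x := by
      have h1 : HasDerivAt (fun x' : ℝ => c₂ + a * x') a x := by
        simpa using ((hasDerivAt_id x).const_mul a).const_add c₂
      simpa using h1.mul_const (t ^ (α - 1))
    have hfun : (fun x' : ℝ => v x' t) = fun x' : ℝ => (c₂ + a * x') * t ^ (α - 1) :=
      funext fun x' => hv x' t
    rw [hfun, hd.deriv]
  · rw [RL_eval hα0 hα1 0 (c₂ + a * x) (v x)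
      (fun s => by rw [hv]; ring) ht]
    ring
  · have hfun : (fun x' : ℝ => u x' t)
        = fun _ : ℝ => a * (Real.Gamma α / Real.Gamma (2 * α)) * t ^ (2 * α - 1)
            + c₁ * t ^ (α - 1) := funext fun x' => hu x' t
    rw [hfun, deriv_const]
    ring
end

section
/- Let 0<α<1, k≠0, c₁>0, c₂∈ℝ, and set θ(x) = (√c₁/(2k²))·Γ(1+α)·(x−c₂). Then for all t>0 and all x with cos θ(x) ≠ 0, the pair u(x,t) = (c₁/(2k²))·(Γ(1+α)²/Γ(1+2α))·t^{2α}·(tan²θ(x)+1), v(x,t) = √c₁·t^{α}·tan θ(x) solves system (15) with m = −1/2, i.e. D^α_t u = ∂v/∂x and D^α_t v = k²·u^{−1}·∂u/∂x. -/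
lemma real_beta_scaled (p q : ℝ) (hp : 0 < p) (hq : 0 < q) {τ : ℝ} (hτ : 0 < τ) :
    ∫ s in (0:ℝ)..τ, s ^ (p - 1) * (τ - s) ^ (q - 1) =
      Real.Gamma p * Real.Gamma q / Real.Gamma (p + q) * τ ^ (p + q - 1) := by
  have key : ((∫ s in (0:ℝ)..τ, s ^ (p - 1) * (τ - s) ^ (q - 1) : ℝ) : ℂ)
      = ((Real.Gamma p * Real.Gamma q / Real.Gamma (p + q) * τ ^ (p + q - 1) : ℝ) : ℂ) := by
    rw [← intervalIntegral.integral_ofReal]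
    have h1 : ∫ s in (0:ℝ)..τ, ((s ^ (p - 1) * (τ - s) ^ (q - 1) : ℝ) : ℂ)
        = ∫ s in (0:ℝ)..τ, (s : ℂ) ^ ((p : ℂ) - 1) * ((τ : ℂ) - s) ^ ((q : ℂ) - 1) := by
      refine intervalIntegral.integral_congr fun s hs => ?_
      rw [Set.uIcc_of_le hτ.le] at hs
      push_cast
      rw [Complex.ofReal_cpow hs.1 (p - 1), Complex.ofReal_cpow (by linarith [hs.2]) (q - 1)]
      push_cast
      ring_nf
    rw [h1, Complex.betaIntegral_scaled p q hτ]
    have hΓ : Complex.Gamma ((p : ℂ) + q) ≠ 0 := by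
      rw [show ((p:ℂ) + q) = ((p + q : ℝ) : ℂ) by push_cast; ring, Complex.Gamma_ofReal]
      exact_mod_cast (Real.Gamma_pos_of_pos (by linarith)).ne'
    have hbeta : Complex.betaIntegral p q
        = Complex.Gamma p * Complex.Gamma q / Complex.Gamma ((p:ℂ) + q) := by
      have h2 := Complex.Gamma_mul_Gamma_eq_betaIntegral (s := (p:ℂ)) (t := (q:ℂ))
        (by simpa using hp) (by simpa using hq)
      rw [eq_div_iff hΓ, mul_comm, h2]
    rw [hbeta, show ((p:ℂ) + q - 1) = ((p + q - 1 : ℝ) : ℂ) by push_cast; ring,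
      ← Complex.ofReal_cpow hτ.le]
    push_cast [← Complex.Gamma_ofReal]
    ring
  exact_mod_cast key

/-- Riemann–Liouville derivative of `c·t^β` for `β > 0`, `0 < α < 1`, `t > 0`. -/
lemma RLderiv_rpow (α β c : ℝ) (hα0 : 0 < α) (hα1 : α < 1) (hβ : 0 < β)
    {t : ℝ} (ht : 0 < t) :
    RLderiv α (fun s => c * s ^ β) t
      = c * (Real.Gamma (β + 1) / Real.Gamma (β + 1 - α)) * t ^ (β - α) := by
  have hq : 0 < 1 - α := by linarith
  set B : ℝ := Real.Gamma (β + 1) * Real.Gamma (1 - α) / Real.Gamma (β + 2 - α) with hB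
  have hev : (fun τ : ℝ => ∫ s in (0:ℝ)..τ, (c * s ^ β) * (τ - s) ^ (-α))
      =ᶠ[nhds t] (fun τ : ℝ => c * B * τ ^ (β + 1 - α)) := by
    filter_upwards [IsOpen.mem_nhds isOpen_Ioi ht] with τ (hτ : 0 < τ)
    have := real_beta_scaled (β + 1) (1 - α) (by linarith) hq hτ
    simp only [show β + 1 - 1 = β by ring, show (1 - α) - 1 = -α by ring,
      show β + 1 + (1 - α) - 1 = β + 1 - α by ring,
      show β + 1 + (1 - α) = β + 2 - α by ring] at this
    calc ∫ s in (0:ℝ)..τ, (c * s ^ β) * (τ - s) ^ (-α)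
        = c * ∫ s in (0:ℝ)..τ, s ^ β * (τ - s) ^ (-α) := by
          rw [← intervalIntegral.integral_const_mul]; congr 1; ext s; ring
      _ = c * B * τ ^ (β + 1 - α) := by rw [this, hB]; ring
  have hd : deriv (fun τ : ℝ => ∫ s in (0:ℝ)..τ, (c * s ^ β) * (τ - s) ^ (-α)) t
      = c * B * ((β + 1 - α) * t ^ (β - α)) := by
    rw [Filter.EventuallyEq.deriv_eq hev]
    have h := (Real.hasDerivAt_rpow_const (x := t) (p := β + 1 - α) (Or.inl ht.ne')).const_mul
      (c * B)
    rw [h.deriv, show β + 1 - α - 1 = β - α by ring]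
  rw [RLderiv, hd, hB]
  have h1 : Real.Gamma (β + 2 - α) = (β + 1 - α) * Real.Gamma (β + 1 - α) := by
    rw [show β + 2 - α = (β + 1 - α) + 1 by ring, Real.Gamma_add_one (by linarith)]
  have h2 : Real.Gamma (1 - α) ≠ 0 := (Real.Gamma_pos_of_pos hq).ne'
  have h3 : Real.Gamma (β + 1 - α) ≠ 0 := (Real.Gamma_pos_of_pos (by linarith)).ne'
  have he : β + 1 - α ≠ 0 := by linarith
  rw [h1]
  generalize Real.Gamma (β + 1) = G2
  generalize hg3 : Real.Gamma (β + 1 - α) = G3 at h3 ⊢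
  generalize hg1 : Real.Gamma (1 - α) = G1 at h2 ⊢
  generalize he' : β + 1 - α = e at he ⊢
  field_simp

/-- With `θ(x) = (√c₁/(2k²))·Γ(1+α)·(x-c₂)`, the pair
`u(x,t) = (c₁/(2k²))·(Γ(1+α)²/Γ(1+2α))·t^(2α)·(tan²θ + 1)`,
`v(x,t) = √c₁·t^α·tan θ` solves system (15) with `m = -1/2`
(i.e. `D^α_t u = v_x`, `D^α_t v = k²·u^(-1)·u_x`) wherever `cos θ(x) ≠ 0`, `t > 0`. -/
theorem invariant_solution_tan (α k c₁ c₂ : ℝ) (hα0 : 0 < α) (hα1 : α < 1)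
    (hk : k ≠ 0) (hc₁ : 0 < c₁)
    (θ : ℝ → ℝ)
    (hθ : ∀ x : ℝ, θ x = Real.sqrt c₁ / (2 * k ^ 2) * Real.Gamma (1 + α) * (x - c₂))
    (u v : ℝ → ℝ → ℝ)
    (hu : ∀ x t : ℝ, u x t =
      c₁ / (2 * k ^ 2) * (Real.Gamma (1 + α) ^ 2 / Real.Gamma (1 + 2 * α)) *
        t ^ (2 * α) * (Real.tan (θ x) ^ 2 + 1))
    (hv : ∀ x t : ℝ, v x t = Real.sqrt c₁ * t ^ α * Real.tan (θ x)) :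
    ∀ t : ℝ, 0 < t → ∀ x : ℝ, Real.cos (θ x) ≠ 0 →
      RLderiv α (u x) t = deriv (fun x' => v x' t) x ∧
      RLderiv α (v x) t =
        k ^ 2 * (u x t) ^ (-1 : ℝ) * deriv (fun x' => u x' t) x := by
  intro t ht x hcos
  set K : ℝ := Real.sqrt c₁ / (2 * k ^ 2) * Real.Gamma (1 + α) with hK
  set T : ℝ := Real.tan (θ x) with hT
  have hk2 : (k:ℝ) ^ 2 ≠ 0 := pow_ne_zero 2 hk
  have hsq : Real.sqrt c₁ ^ 2 = c₁ := Real.sq_sqrt hc₁.le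
  have hsqpos : 0 < Real.sqrt c₁ := Real.sqrt_pos.mpr hc₁
  have hΓ1 : 0 < Real.Gamma (1 + α) := Real.Gamma_pos_of_pos (by linarith)
  have hΓ2 : 0 < Real.Gamma (1 + 2 * α) := Real.Gamma_pos_of_pos (by linarith)
  have hcos2 : Real.cos (θ x) ^ 2 ≠ 0 := pow_ne_zero 2 hcos
  have htansq : T ^ 2 + 1 = 1 / Real.cos (θ x) ^ 2 := by
    have := Real.inv_one_add_tan_sq hcos
    rw [hT]
    field_simp
    field_simp at this
    linarith [this]
  -- derivative of θ
  have hθd : HasDerivAt θ K x := by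
    have h : HasDerivAt (fun x' : ℝ => K * (x' - c₂)) K x := by
      simpa using ((hasDerivAt_id x).sub_const c₂).const_mul K
    exact h.congr_of_eventuallyEq (Filter.Eventually.of_forall fun z => hθ z)
  -- derivative of tan ∘ θ at x
  have htand : HasDerivAt (fun x' => Real.tan (θ x')) ((1 / Real.cos (θ x) ^ 2) * K) x :=
    (Real.hasDerivAt_tan hcos).comp x hθd
  constructor
  · -- first equation
    have hufun : u x = fun s : ℝ =>
        (c₁ / (2 * k ^ 2) * (Real.Gamma (1 + α) ^ 2 / Real.Gamma (1 + 2 * α)) * (T ^ 2 + 1))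
          * s ^ (2 * α) := by
      funext s; rw [hu x s]; ring
    have hL : RLderiv α (u x) t =
        (c₁ / (2 * k ^ 2) * (Real.Gamma (1 + α) ^ 2 / Real.Gamma (1 + 2 * α)) * (T ^ 2 + 1))
          * (Real.Gamma (2 * α + 1) / Real.Gamma (2 * α + 1 - α)) * t ^ (2 * α - α) := by
      rw [hufun]; exact RLderiv_rpow α (2 * α) _ hα0 hα1 (by linarith) ht
    have hR : deriv (fun x' => v x' t) x
        = Real.sqrt c₁ * t ^ α * ((1 / Real.cos (θ x) ^ 2) * K) := by
      have h : HasDerivAt (fun x' => v x' t)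
          (Real.sqrt c₁ * t ^ α * ((1 / Real.cos (θ x) ^ 2) * K)) x := by
        have h := htand.const_mul (Real.sqrt c₁ * t ^ α)
        exact h.congr_of_eventuallyEq (Filter.Eventually.of_forall fun z => hv z t)
      exact h.deriv
    rw [hL, hR, hK]
    rw [show 2 * α + 1 - α = 1 + α by ring, show 2 * α - α = α by ring,
      show 2 * α + 1 = 1 + 2 * α by ring, htansq]
    field_simp
    linear_combination (-1 : ℝ) * hsq
  · -- second equation
    have hvfun : v x = fun s : ℝ => (Real.sqrt c₁ * T) * s ^ α := by
      funext s; rw [hv x s]; ring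
    have hL : RLderiv α (v x) t =
        (Real.sqrt c₁ * T) * (Real.Gamma (α + 1) / Real.Gamma (α + 1 - α)) * t ^ (α - α) := by
      rw [hvfun]; exact RLderiv_rpow α α _ hα0 hα1 hα0 ht
    -- spatial derivative of u
    set D : ℝ := c₁ / (2 * k ^ 2) * (Real.Gamma (1 + α) ^ 2 / Real.Gamma (1 + 2 * α)) * t ^ (2 * α)
      with hD
    have hDpos : 0 < D := by
      rw [hD]
      have : (0:ℝ) < t ^ (2 * α) := Real.rpow_pos_of_pos ht _
      positivity
    have hux : deriv (fun x' => u x' t) x = D * (2 * T * ((1 / Real.cos (θ x) ^ 2) * K)) := by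
      have h1 : HasDerivAt (fun x' => Real.tan (θ x') ^ 2 + 1)
          (2 * T * ((1 / Real.cos (θ x) ^ 2) * K)) x := by
        have h := (htand.pow 2).add_const 1
        exact h.congr_deriv (by rw [hT, show (2:ℕ) - 1 = 1 from rfl]; push_cast; ring)
      have heq : (fun x' => u x' t) = fun y => D * (Real.tan (θ y) ^ 2 + 1) :=
        funext fun z => by rw [hu z t]
      rw [heq, (h1.const_mul D).deriv]
    have huval : u x t = D * (T ^ 2 + 1) := by rw [hu x t]
    have hupos : 0 < u x t := by
      rw [huval, htansq]
      positivity
    rw [hL, hux, huval, Real.rpow_neg_one]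
    rw [show α + 1 - α = 1 by ring, Real.Gamma_one, show α - α = 0 by ring, Real.rpow_zero,
      show α + 1 = 1 + α by ring, hK]
    rw [htansq]
    field_simp
end

section
/- Let 0<α<1 with α≠1/2, let a≠0, k≠0, and c₁,c₂∈ℝ. On any open interval I on which w(x) := −(a·Γ(α+1)/(k²(1−2α)))·x + c₁ is positive, the functions φ(x) = w(x)^{1−2α} and ψ(x) = (k²(2α−1)/(2a(1−α)))·(Γ(2α)/(Γ(α)Γ(α+1)))·w(x)^{2(1−α)} + c₂ satisfy the reduced system of ordinary differential equations ψ'(x) = (Γ(2α)/Γ(α))·φ(x) and k²·φ(x)^{2α/(1−2α)}·φ'(x) = −a·Γ(α+1) for all x∈I. -/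
/-- On any open interval where `w(x) = -(a·Γ(α+1)/(k²(1-2α)))·x + c₁` is positive, the
functions `φ = w^(1-2α)` and
`ψ = (k²(2α-1)/(2a(1-α)))·(Γ(2α)/(Γ(α)Γ(α+1)))·w^(2(1-α)) + c₂` satisfy the reduced
system `ψ' = (Γ(2α)/Γ(α))·φ` and `k²·φ^(2α/(1-2α))·φ' = -a·Γ(α+1)`. -/
theorem reduced_ode_solution_case22_U4 (α a k c₁ c₂ p q : ℝ)
    (hα0 : 0 < α) (hα1 : α < 1) (hα2 : α ≠ 1 / 2) (ha : a ≠ 0) (hk : k ≠ 0)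
    (w φ ψ : ℝ → ℝ)
    (hw : ∀ x : ℝ, w x = -(a * Real.Gamma (α + 1) / (k ^ 2 * (1 - 2 * α))) * x + c₁)
    (hpos : ∀ x ∈ Set.Ioo p q, 0 < w x)
    (hφ : ∀ x : ℝ, φ x = w x ^ (1 - 2 * α))
    (hψ : ∀ x : ℝ, ψ x =
      k ^ 2 * (2 * α - 1) / (2 * a * (1 - α)) *
        (Real.Gamma (2 * α) / (Real.Gamma α * Real.Gamma (α + 1))) *
          w x ^ (2 * (1 - α)) + c₂) :
    ∀ x ∈ Set.Ioo p q,
      deriv ψ x = (Real.Gamma (2 * α) / Real.Gamma α) * φ x ∧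
      k ^ 2 * φ x ^ (2 * α / (1 - 2 * α)) * deriv φ x = -(a * Real.Gamma (α + 1)) := by
  intro x hx
  have hwx := hpos x hx
  set m : ℝ := -(a * Real.Gamma (α + 1) / (k ^ 2 * (1 - 2 * α))) with hm
  have h12 : 1 - 2 * α ≠ 0 := by
    intro h; apply hα2; linarith
  have hΓα : Real.Gamma α ≠ 0 := (Real.Gamma_pos_of_pos hα0).ne'
  have hΓα1 : Real.Gamma (α + 1) ≠ 0 := (Real.Gamma_pos_of_pos (by linarith)).ne'
  have h1α : (1 : ℝ) - α ≠ 0 := by linarith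
  have hwD : HasDerivAt w m x := by
    simpa [funext hw] using ((hasDerivAt_id x).const_mul m).add_const c₁
  have hφD : HasDerivAt φ (m * (1 - 2 * α) * w x ^ (1 - 2 * α - 1)) x := by
    have := hwD.rpow_const (p := 1 - 2 * α) (Or.inl hwx.ne')
    simpa [funext hφ] using this
  have hψD : HasDerivAt ψ (k ^ 2 * (2 * α - 1) / (2 * a * (1 - α)) *
        (Real.Gamma (2 * α) / (Real.Gamma α * Real.Gamma (α + 1))) *
        (m * (2 * (1 - α)) * w x ^ (2 * (1 - α) - 1))) x := by
    have := ((hwD.rpow_const (p := 2 * (1 - α)) (Or.inl hwx.ne')).const_mul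
      (k ^ 2 * (2 * α - 1) / (2 * a * (1 - α)) *
        (Real.Gamma (2 * α) / (Real.Gamma α * Real.Gamma (α + 1))))).add_const c₂
    simpa [funext hψ, mul_comm, mul_assoc, mul_left_comm] using this
  have hexp1 : 2 * (1 - α) - 1 = 1 - 2 * α := by ring
  constructor
  · rw [hψD.deriv, hφ, hexp1, hm]
    field_simp
    ring
  · have hB : w x ^ (2 * α) * w x ^ (1 - 2 * α - 1) = 1 := by
      rw [← Real.rpow_add hwx, show 2 * α + (1 - 2 * α - 1) = 0 by ring, Real.rpow_zero]
    rw [hφD.deriv, hφ, ← Real.rpow_mul hwx.le,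
      show (1 - 2 * α) * (2 * α / (1 - 2 * α)) = 2 * α by field_simp,
      show k ^ 2 * w x ^ (2 * α) * (m * (1 - 2 * α) * w x ^ (1 - 2 * α - 1)) =
        k ^ 2 * m * (1 - 2 * α) * (w x ^ (2 * α) * w x ^ (1 - 2 * α - 1)) by ring,
      hB, hm]
    field_simp
    ring_nf
    have h12' : (1 : ℝ) - α * 2 ≠ 0 := by intro h; apply h12; linarith
    have hI : (1 - α * 2)⁻¹ * (1 - α * 2) = 1 := inv_mul_cancel₀ h12'
    linear_combination (-1 : ℝ) * hI
end

section
/- Let 0<α<1 with α≠1/2, set m = α/(1−2α), and let a∈ℝ, k≠0. Suppose φ and ψ are differentiable on an open interval I with φ>0 on I, and satisfy ψ'(x) = (Γ(2α)/Γ(α))·φ(x) and k²·φ(x)^{2m}·φ'(x) = −a·Γ(α+1) on I. Then the pair u(x,t) = t^{2α−1}·φ(x), v(x,t) = t^{α−1}·ψ(x) − a·α·t^{α−1}·ln t solves system (15), i.e. D^α_t u = ∂v/∂x and D^α_t v = k²·u^{2m}·∂u/∂x, for all x∈I and t>0. -/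
open MeasureTheory

/-- The real Beta integral is interval-integrable for positive parameters. -/
lemma realBeta_integrable {x y : ℝ} (hx : 0 < x) (hy : 0 < y) :
    IntervalIntegrable (fun u : ℝ => u ^ (x - 1) * (1 - u) ^ (y - 1)) volume 0 1 := by
  have hc := Complex.betaIntegral_convergent (u := (x : ℂ)) (v := (y : ℂ))
    (by simpa using hx) (by simpa using hy)
  rw [intervalIntegrable_iff] at hc ⊢
  have hre := hc.re
  refine hre.congr ?_
  rw [Set.uIoc_of_le (by norm_num : (0:ℝ) ≤ 1)]
  refine (ae_restrict_iff' measurableSet_Ioc).2 (ae_of_all _ fun u hu => ?_)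
  have h0 : (0:ℝ) ≤ u := hu.1.le
  have h1 : (0:ℝ) ≤ 1 - u := by linarith [hu.2]
  have e1 : ((u : ℂ)) ^ ((x : ℂ) - 1) = ((u ^ (x - 1) : ℝ) : ℂ) := by
    rw [Complex.ofReal_cpow h0]; push_cast; ring_nf
  have e2 : (1 - (u : ℂ)) ^ ((y : ℂ) - 1) = (((1 - u) ^ (y - 1) : ℝ) : ℂ) := by
    rw [show (1 - (u:ℂ)) = (((1 - u : ℝ)) : ℂ) by push_cast; ring,
      Complex.ofReal_cpow h1]; push_cast; ring_nf
  simp [e1, e2, ← Complex.ofReal_mul]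

/-- The value of the real Beta integral. -/
lemma realBeta_value {x y : ℝ} (hx : 0 < x) (hy : 0 < y) :
    ∫ u in (0:ℝ)..1, u ^ (x - 1) * (1 - u) ^ (y - 1)
      = Real.Gamma x * Real.Gamma y / Real.Gamma (x + y) := by
  have h := Complex.Gamma_mul_Gamma_eq_betaIntegral (s := (x : ℂ)) (t := (y : ℂ))
    (by simpa using hx) (by simpa using hy)
  have hbeta : Complex.betaIntegral x y
      = ((∫ u in (0:ℝ)..1, u ^ (x - 1) * (1 - u) ^ (y - 1) : ℝ) : ℂ) := by
    rw [Complex.betaIntegral, ← intervalIntegral.integral_ofReal]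
    apply intervalIntegral.integral_congr
    intro u hu
    rw [Set.uIcc_of_le (by norm_num : (0:ℝ) ≤ 1)] at hu
    have h0 : (0:ℝ) ≤ u := hu.1
    have h1 : (0:ℝ) ≤ 1 - u := by linarith [hu.2]
    have e1 : ((u : ℂ)) ^ ((x : ℂ) - 1) = ((u ^ (x - 1) : ℝ) : ℂ) := by
      rw [Complex.ofReal_cpow h0]; push_cast; ring_nf
    have e2 : (1 - (u : ℂ)) ^ ((y : ℂ) - 1) = (((1 - u) ^ (y - 1) : ℝ) : ℂ) := by
      rw [show (1 - (u:ℂ)) = (((1 - u : ℝ)) : ℂ) by push_cast; ring,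
        Complex.ofReal_cpow h1]; push_cast; ring_nf
    simp [e1, e2, ← Complex.ofReal_mul]
  rw [hbeta, show ((x:ℂ) + (y:ℂ)) = (((x + y : ℝ)) : ℂ) by push_cast; ring,
    Complex.Gamma_ofReal, Complex.Gamma_ofReal, Complex.Gamma_ofReal,
    ← Complex.ofReal_mul, ← Complex.ofReal_mul] at h
  have h2 : Real.Gamma x * Real.Gamma y
      = Real.Gamma (x + y) * ∫ u in (0:ℝ)..1, u ^ (x - 1) * (1 - u) ^ (y - 1) := by
    exact_mod_cast h
  have hΓ : Real.Gamma (x + y) ≠ 0 := (Real.Gamma_pos_of_pos (by linarith)).ne'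
  rw [eq_div_iff hΓ]
  linear_combination -h2

lemma abs_log_le_aux {u ε : ℝ} (hu0 : 0 < u) (hu1 : u ≤ 1) (hε : 0 < ε) :
    |Real.log u| ≤ ε⁻¹ * u ^ (-ε) := by
  rw [abs_of_nonpos (Real.log_nonpos hu0.le hu1)]
  have h1 : Real.log (u ^ (-ε)) ≤ u ^ (-ε) - 1 :=
    Real.log_le_sub_one_of_pos (Real.rpow_pos_of_pos hu0 _)
  rw [Real.log_rpow hu0] at h1
  have h2 := mul_le_mul_of_nonneg_left h1 (inv_pos.2 hε).le
  rw [mul_sub, mul_one, show ε⁻¹ * (-ε * Real.log u) = -(ε⁻¹ * ε) * Real.log u by ring,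
    inv_mul_cancel₀ hε.ne'] at h2
  have h3 : (0:ℝ) ≤ ε⁻¹ := (inv_pos.2 hε).le
  linarith

/-- Integrability of the Beta integrand times a logarithm. -/
lemma betaLog_integrable {α : ℝ} (h0 : 0 < α) (h1 : α < 1) :
    IntervalIntegrable (fun u : ℝ => u ^ (α - 1) * (1 - u) ^ (-α) * Real.log u)
      volume 0 1 := by
  have hg : IntervalIntegrable
      (fun u : ℝ => (α/2)⁻¹ * (u ^ (α/2 - 1) * (1 - u) ^ ((1 - α) - 1))) volume 0 1 :=
    (realBeta_integrable (x := α/2) (y := 1 - α) (by linarith) (by linarith)).const_mul _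
  refine hg.mono_fun ?_ ?_
  · apply Measurable.aestronglyMeasurable
    exact (show Measurable fun u : ℝ => u ^ (α - 1) * (1 - u) ^ (-α) by fun_prop).mul
      Real.measurable_log
  · rw [Set.uIoc_of_le (by norm_num : (0:ℝ) ≤ 1)]
    refine (ae_restrict_iff' measurableSet_Ioc).2 (ae_of_all _ fun u hu => ?_)
    have hu0 : 0 < u := hu.1
    have hu1 : (0:ℝ) ≤ 1 - u := by linarith [hu.2]
    have hε : (0:ℝ) < α/2 := by linarith
    have hA : (0:ℝ) ≤ u ^ (α - 1) * (1 - u) ^ (-α) :=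
      mul_nonneg (Real.rpow_nonneg hu0.le _) (Real.rpow_nonneg hu1 _)
    calc ‖u ^ (α - 1) * (1 - u) ^ (-α) * Real.log u‖
        = u ^ (α - 1) * (1 - u) ^ (-α) * |Real.log u| := by
          rw [Real.norm_eq_abs, abs_mul, abs_of_nonneg hA]
      _ ≤ u ^ (α - 1) * (1 - u) ^ (-α) * ((α/2)⁻¹ * u ^ (-(α/2))) :=
          mul_le_mul_of_nonneg_left (abs_log_le_aux hu0 hu.2 hε) hA
      _ = ‖(α/2)⁻¹ * (u ^ (α/2 - 1) * (1 - u) ^ ((1 - α) - 1))‖ := by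
          rw [Real.norm_eq_abs, abs_of_nonneg (by positivity),
            show α/2 - 1 = (α - 1) + -(α/2) by ring, Real.rpow_add hu0,
            show (1 - α) - 1 = -α by ring]
          ring

/-- Value of the kernel integral for a power function, valid for `τ > 0`. -/
lemma rl_integral_rpow {α β C : ℝ} {τ : ℝ} (hτ : 0 < τ) :
    (∫ s in (0:ℝ)..τ, (s ^ β * C) * (τ - s) ^ (-α))
      = C * (∫ u in (0:ℝ)..1, u ^ β * (1 - u) ^ (-α)) * τ ^ (β + 1 - α) := by
  set g : ℝ → ℝ := fun s => (s ^ β * C) * (τ - s) ^ (-α) with hg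
  have h1 : (τ • ∫ u in (0:ℝ)..1, g (τ * u)) = ∫ s in (0:ℝ)..τ, g s := by
    simpa using intervalIntegral.smul_integral_comp_mul_left g τ
  have h2 : (∫ u in (0:ℝ)..1, g (τ * u))
      = ∫ u in (0:ℝ)..1, (C * τ ^ (β - α)) * (u ^ β * (1 - u) ^ (-α)) := by
    apply intervalIntegral.integral_congr
    intro u hu
    rw [Set.uIcc_of_le (by norm_num : (0:ℝ) ≤ 1)] at hu
    have hu0 : (0:ℝ) ≤ u := hu.1
    have hu1 : (0:ℝ) ≤ 1 - u := by linarith [hu.2]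
    simp only [hg]
    rw [show τ - τ * u = τ * (1 - u) by ring, Real.mul_rpow hτ.le hu0,
      Real.mul_rpow hτ.le hu1, show β - α = β + -α by ring, Real.rpow_add hτ]
    ring
  rw [← h1, h2, intervalIntegral.integral_const_mul, smul_eq_mul,
    show β + 1 - α = 1 + (β - α) by ring, Real.rpow_add hτ, Real.rpow_one]
  ring

/-- Value of the kernel integral for `s^(α-1)·C₁ - C₂·s^(α-1)·log s`, `τ > 0`. -/
lemma rl_integral_log {α C₁ C₂ : ℝ} (h0 : 0 < α) (h1 : α < 1) {τ : ℝ} (hτ : 0 < τ) :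
    (∫ s in (0:ℝ)..τ, (s ^ (α - 1) * C₁ - C₂ * s ^ (α - 1) * Real.log s) * (τ - s) ^ (-α))
      = (C₁ * (∫ u in (0:ℝ)..1, u ^ (α - 1) * (1 - u) ^ (-α))
          - C₂ * (∫ u in (0:ℝ)..1, u ^ (α - 1) * (1 - u) ^ (-α) * Real.log u))
        - (C₂ * (∫ u in (0:ℝ)..1, u ^ (α - 1) * (1 - u) ^ (-α))) * Real.log τ := by
  set g : ℝ → ℝ := fun s =>
    (s ^ (α - 1) * C₁ - C₂ * s ^ (α - 1) * Real.log s) * (τ - s) ^ (-α) with hg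
  have h1' : (τ • ∫ u in (0:ℝ)..1, g (τ * u)) = ∫ s in (0:ℝ)..τ, g s := by
    simpa using intervalIntegral.smul_integral_comp_mul_left g τ
  have h2 : (∫ u in (0:ℝ)..1, g (τ * u))
      = ∫ u in (0:ℝ)..1,
          (τ⁻¹ * (C₁ - C₂ * Real.log τ)) * (u ^ (α - 1) * (1 - u) ^ (-α))
          - (τ⁻¹ * C₂) * (u ^ (α - 1) * (1 - u) ^ (-α) * Real.log u) := by
    apply intervalIntegral.integral_congr
    intro u hu
    rw [Set.uIcc_of_le (by norm_num : (0:ℝ) ≤ 1)] at hu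
    have hu1 : (0:ℝ) ≤ 1 - u := by linarith [hu.2]
    rcases eq_or_lt_of_le hu.1 with h | hu0
    · simp [hg, ← h, Real.zero_rpow (show α - 1 ≠ 0 from by intro h'; linarith)]
    · simp only [hg]
      have key : τ ^ (α - 1) * τ ^ (-α) = τ⁻¹ := by
        rw [← Real.rpow_add hτ, show α - 1 + -α = (-1:ℝ) by ring, Real.rpow_neg_one]
      rw [Real.mul_rpow hτ.le hu0.le, Real.log_mul hτ.ne' hu0.ne',
        show τ - τ * u = τ * (1 - u) by ring, Real.mul_rpow hτ.le hu1]
      linear_combination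
        (u ^ (α - 1) * (1 - u) ^ (-α) *
          (C₁ - C₂ * Real.log τ - C₂ * Real.log u)) * key
  have hint1 : IntervalIntegrable
      (fun u : ℝ => (τ⁻¹ * (C₁ - C₂ * Real.log τ)) * (u ^ (α - 1) * (1 - u) ^ (-α)))
      volume 0 1 := by
    have := (realBeta_integrable (x := α) (y := 1 - α) h0 (by linarith)).const_mul
      (τ⁻¹ * (C₁ - C₂ * Real.log τ))
    simpa [show (1 - α) - 1 = -α by ring] using this
  have hint2 : IntervalIntegrable
      (fun u : ℝ => (τ⁻¹ * C₂) * (u ^ (α - 1) * (1 - u) ^ (-α) * Real.log u))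
      volume 0 1 := (betaLog_integrable h0 h1).const_mul _
  rw [← h1', h2, intervalIntegral.integral_sub hint1 hint2,
    intervalIntegral.integral_const_mul, intervalIntegral.integral_const_mul, smul_eq_mul]
  field_simp
  ring

/-- Case 2.2, `U₄`: if `φ, ψ` solve the reduced non-fractional system on an open
interval `I` with `φ > 0`, then `u(x,t) = t^(2α-1)·φ(x)`,
`v(x,t) = t^(α-1)·ψ(x) - aα·t^(α-1)·ln t` solves system (15) with
`m = α/(1-2α)` for `x ∈ I`, `t > 0`. -/
theorem invariant_solution_case22_U4 (α a k m p q : ℝ)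
    (hα0 : 0 < α) (hα1 : α < 1) (hα2 : α ≠ 1 / 2) (hm : m = α / (1 - 2 * α))
    (hk : k ≠ 0) (φ ψ : ℝ → ℝ)
    (hdiff : ∀ x ∈ Set.Ioo p q, DifferentiableAt ℝ φ x ∧ DifferentiableAt ℝ ψ x)
    (hφpos : ∀ x ∈ Set.Ioo p q, 0 < φ x)
    (hode₁ : ∀ x ∈ Set.Ioo p q, deriv ψ x = (Real.Gamma (2 * α) / Real.Gamma α) * φ x)
    (hode₂ : ∀ x ∈ Set.Ioo p q,
      k ^ 2 * φ x ^ (2 * m) * deriv φ x = -(a * Real.Gamma (α + 1))) :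
    ∀ x ∈ Set.Ioo p q, ∀ t : ℝ, 0 < t →
      RLderiv α (fun t' => t' ^ (2 * α - 1) * φ x) t =
        deriv (fun x' => t ^ (α - 1) * ψ x' - a * α * t ^ (α - 1) * Real.log t) x ∧
      RLderiv α
          (fun t' => t' ^ (α - 1) * ψ x - a * α * t' ^ (α - 1) * Real.log t') t =
        k ^ 2 * (t ^ (2 * α - 1) * φ x) ^ (2 * m) *
          deriv (fun x' => t ^ (2 * α - 1) * φ x') x := by
  intro x hx t ht
  have hΓ1α : (0:ℝ) < Real.Gamma (1 - α) := Real.Gamma_pos_of_pos (by linarith)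
  have hΓα : (0:ℝ) < Real.Gamma α := Real.Gamma_pos_of_pos hα0
  have hGadd : Real.Gamma (α + 1) = α * Real.Gamma α := Real.Gamma_add_one hα0.ne'
  have htpos : ∀ᶠ τ in nhds t, (0:ℝ) < τ := eventually_gt_nhds ht
  constructor
  · -- first equation
    set B : ℝ := ∫ u in (0:ℝ)..1, u ^ (2 * α - 1) * (1 - u) ^ (-α) with hB
    have hBval : B = Real.Gamma (2 * α) * Real.Gamma (1 - α) / Real.Gamma (α + 1) := by
      have h := realBeta_value (x := 2 * α) (y := 1 - α) (by linarith) (by linarith)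
      rw [show ((1 - α) - 1 : ℝ) = -α by ring,
        show (2 * α + (1 - α) : ℝ) = α + 1 by ring] at h
      rw [hB, h]
    have hev : (fun τ : ℝ => ∫ s in (0:ℝ)..τ,
          (s ^ (2 * α - 1) * φ x) * (τ - s) ^ (-α))
        =ᶠ[nhds t] fun τ => (φ x * B) * τ ^ α := by
      filter_upwards [htpos] with τ hτ
      rw [rl_integral_rpow hτ, show (2 * α - 1 + 1 - α : ℝ) = α by ring]
      all_goals simp only [hB]
      all_goals ring
    have hD : deriv (fun τ : ℝ => ∫ s in (0:ℝ)..τ,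
          (s ^ (2 * α - 1) * φ x) * (τ - s) ^ (-α)) t
        = (φ x * B) * (α * t ^ (α - 1)) := by
      rw [hev.deriv_eq]
      exact ((Real.hasDerivAt_rpow_const (p := α) (Or.inl ht.ne')).const_mul (φ x * B)).deriv
    have hRHS : deriv (fun x' => t ^ (α - 1) * ψ x' - a * α * t ^ (α - 1) * Real.log t) x
        = t ^ (α - 1) * deriv ψ x := by
      rw [deriv_fun_sub (((hdiff x hx).2).const_mul _) (differentiableAt_const _),
        deriv_const, sub_zero, deriv_const_mul _ (hdiff x hx).2]
    simp only [RLderiv]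
    rw [hD, hRHS, hode₁ x hx, hBval, hGadd]
    field_simp
  · -- second equation
    set B : ℝ := ∫ u in (0:ℝ)..1, u ^ (α - 1) * (1 - u) ^ (-α) with hB
    set Cl : ℝ := ∫ u in (0:ℝ)..1, u ^ (α - 1) * (1 - u) ^ (-α) * Real.log u with hCl
    have hBval : B = Real.Gamma α * Real.Gamma (1 - α) := by
      have h := realBeta_value (x := α) (y := 1 - α) hα0 (by linarith)
      rw [show ((1 - α) - 1 : ℝ) = -α by ring,
        show (α + (1 - α) : ℝ) = 1 by ring, Real.Gamma_one, div_one] at h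
      rw [hB, h]
    have hev : (fun τ : ℝ => ∫ s in (0:ℝ)..τ,
          (s ^ (α - 1) * ψ x - a * α * s ^ (α - 1) * Real.log s) * (τ - s) ^ (-α))
        =ᶠ[nhds t] fun τ => (ψ x * B - a * α * Cl) - (a * α * B) * Real.log τ := by
      filter_upwards [htpos] with τ hτ
      rw [rl_integral_log hα0 hα1 hτ]
      all_goals simp only [hB, hCl]
      all_goals ring
    have hD : deriv (fun τ : ℝ => ∫ s in (0:ℝ)..τ,
          (s ^ (α - 1) * ψ x - a * α * s ^ (α - 1) * Real.log s) * (τ - s) ^ (-α)) t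
        = -((a * α * B) * t⁻¹) := by
      rw [hev.deriv_eq]
      have : HasDerivAt (fun τ : ℝ => (ψ x * B - a * α * Cl) - (a * α * B) * Real.log τ)
          (0 - (a * α * B) * t⁻¹) t :=
        (hasDerivAt_const _ _).sub ((Real.hasDerivAt_log ht.ne').const_mul (a * α * B))
      simpa using this.deriv
    have hRHS : deriv (fun x' => t ^ (2 * α - 1) * φ x') x
        = t ^ (2 * α - 1) * deriv φ x := deriv_const_mul _ (hdiff x hx).1
    have hpow : (t ^ (2 * α - 1) * φ x) ^ (2 * m)
        = t ^ ((2 * α - 1) * (2 * m)) * φ x ^ (2 * m) := by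
      rw [Real.mul_rpow (Real.rpow_nonneg ht.le _) (hφpos x hx).le, ← Real.rpow_mul ht.le]
    have hexp : (2 * α - 1) * (2 * m) + (2 * α - 1) = -1 := by
      have h12 : (1 - 2 * α) ≠ 0 := by
        intro h; apply hα2; linarith
      rw [hm]; field_simp; ring
    simp only [RLderiv]
    rw [hD, hRHS, hpow]
    have hcollect : k ^ 2 * (t ^ ((2 * α - 1) * (2 * m)) * φ x ^ (2 * m)) *
          (t ^ (2 * α - 1) * deriv φ x)
        = t ^ ((2 * α - 1) * (2 * m) + (2 * α - 1)) *
            (k ^ 2 * φ x ^ (2 * m) * deriv φ x) := by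
      rw [Real.rpow_add ht]; ring
    rw [hcollect, hexp, hode₂ x hx, hBval, Real.rpow_neg_one, hGadd]
    field_simp
end

section
/- Let 0<α<1, k≠0, and let m satisfy m<0 or m>α/(1−α). Set A = Γ(1−α/m)/Γ(1−(m+1)α/m) and B = Γ(1−(m+1)α/m)/Γ(1−(2m+1)α/m). If φ and ψ are differentiable on an open interval I with φ>0 on I and satisfy ψ'(x) = A·φ(x) and k²·φ(x)^{2m}·φ'(x) = B·ψ(x) on I, then the pair u(x,t) = t^{−α/m}·φ(x), v(x,t) = t^{−(m+1)α/m}·ψ(x) solves system (15), i.e. D^α_t u = ∂v/∂x and D^α_t v = k²·u^{2m}·∂u/∂x, for all x∈I and t>0. -/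
lemma real_beta (a b : ℝ) (ha : 0 < a) (hb : 0 < b) :
    Real.Gamma a * Real.Gamma b =
      Real.Gamma (a + b) * ∫ x in (0:ℝ)..1, x ^ (a - 1) * (1 - x) ^ (b - 1) := by
  have h := Complex.Gamma_mul_Gamma_eq_betaIntegral (s := (a : ℂ)) (t := (b : ℂ))
    (by simpa using ha) (by simpa using hb)
  have hbeta : Complex.betaIntegral (a : ℂ) (b : ℂ) =
      ((∫ x in (0:ℝ)..1, x ^ (a - 1) * (1 - x) ^ (b - 1) : ℝ) : ℂ) := by
    rw [Complex.betaIntegral, ← intervalIntegral.integral_ofReal]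
    apply intervalIntegral.integral_congr
    intro x hx
    rw [Set.uIcc_of_le (by norm_num)] at hx
    obtain ⟨hx0, hx1⟩ := hx
    show (x:ℂ) ^ ((a:ℂ) - 1) * (1 - (x:ℂ)) ^ ((b:ℂ) - 1)
        = ((x ^ (a - 1) * (1 - x) ^ (b - 1) : ℝ) : ℂ)
    rw [Complex.ofReal_mul, Complex.ofReal_cpow hx0, Complex.ofReal_cpow (by linarith)]
    push_cast
    ring
  rw [hbeta, ← Complex.ofReal_add, Complex.Gamma_ofReal, Complex.Gamma_ofReal,
    Complex.Gamma_ofReal, ← Complex.ofReal_mul, ← Complex.ofReal_mul,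
    Complex.ofReal_inj] at h
  exact h

lemma RL_rpow (α β t : ℝ) (hα0 : 0 < α) (hα1 : α < 1) (hβ : -1 < β) (ht : 0 < t) :
    RLderiv α (fun τ => τ ^ β) t =
      Real.Gamma (β + 1) / Real.Gamma (β + 1 - α) * t ^ (β - α) := by
  set C : ℝ := ∫ u in (0:ℝ)..1, u ^ β * (1 - u) ^ (-α) with hC
  have hscale : ∀ τ : ℝ, 0 < τ →
      (∫ s in (0:ℝ)..τ, s ^ β * (τ - s) ^ (-α)) = C * τ ^ (β + 1 - α) := by
    intro τ hτ
    have h1 : (τ • ∫ u in (0:ℝ)..1, (u * τ) ^ β * (τ - u * τ) ^ (-α))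
        = ∫ s in (0:ℝ)..τ, s ^ β * (τ - s) ^ (-α) := by
      simpa using intervalIntegral.smul_integral_comp_mul_right
        (f := fun s => s ^ β * (τ - s) ^ (-α)) (a := 0) (b := 1) τ
    have h2 : (∫ u in (0:ℝ)..1, (u * τ) ^ β * (τ - u * τ) ^ (-α))
        = ∫ u in (0:ℝ)..1, τ ^ (β - α) * (u ^ β * (1 - u) ^ (-α)) := by
      apply intervalIntegral.integral_congr
      intro u hu
      rw [Set.uIcc_of_le (by norm_num)] at hu
      obtain ⟨hu0, hu1⟩ := hu
      show (u * τ) ^ β * (τ - u * τ) ^ (-α) = τ ^ (β - α) * (u ^ β * (1 - u) ^ (-α))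
      have e4 : τ ^ (β - α) = τ ^ β * τ ^ (-α) := by
        rw [← Real.rpow_add hτ]; ring_nf
      rw [show τ - u * τ = τ * (1 - u) by ring, Real.mul_rpow hu0 hτ.le,
        Real.mul_rpow hτ.le (by linarith), e4]
      ring
    rw [← h1, h2, intervalIntegral.integral_const_mul, smul_eq_mul,
      show β + 1 - α = (β - α) + 1 by ring, Real.rpow_add_one (ne_of_gt hτ), ← hC]
    ring
  have hderiv : deriv (fun τ : ℝ => ∫ s in (0:ℝ)..τ, s ^ β * (τ - s) ^ (-α)) t
      = C * ((β + 1 - α) * t ^ (β - α)) := by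
    have hev : (fun τ : ℝ => ∫ s in (0:ℝ)..τ, s ^ β * (τ - s) ^ (-α))
        =ᶠ[nhds t] fun τ => C * τ ^ (β + 1 - α) := by
      filter_upwards [Ioi_mem_nhds ht] with τ hτ using hscale τ hτ
    rw [hev.deriv_eq, deriv_const_mul_field,
      (Real.hasDerivAt_rpow_const (x := t) (p := β + 1 - α) (Or.inl (ne_of_gt ht))).deriv,
      show β + 1 - α - 1 = β - α by ring]
  have hβ2 : (0:ℝ) < β + 2 - α := by linarith
  have hbeta : Real.Gamma (β + 1) * Real.Gamma (1 - α) = Real.Gamma (β + 2 - α) * C := by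
    have h := real_beta (β + 1) (1 - α) (by linarith) (by linarith)
    simp only [show β + 1 + (1 - α) = β + 2 - α from by ring,
      show β + 1 - 1 = β from by ring, show 1 - α - 1 = -α from by ring] at h
    rw [hC]; exact h
  have hΓ2pos : 0 < Real.Gamma (β + 2 - α) := Real.Gamma_pos_of_pos hβ2
  have hΓ1pos : 0 < Real.Gamma (β + 1) := Real.Gamma_pos_of_pos (by linarith)
  have hΓαpos : 0 < Real.Gamma (1 - α) := Real.Gamma_pos_of_pos (by linarith)
  simp only [RLderiv]
  rw [hderiv]
  by_cases hz : β + 1 - α = 0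
  · rw [hz]
    simp [Real.Gamma_zero]
  · have hrec : Real.Gamma (β + 2 - α) = (β + 1 - α) * Real.Gamma (β + 1 - α) := by
      have h := Real.Gamma_add_one hz
      rwa [show β + 1 - α + 1 = β + 2 - α by ring] at h
    have hΓne : Real.Gamma (β + 1 - α) ≠ 0 := by
      intro h0
      rw [h0, mul_zero] at hrec
      exact absurd hrec (ne_of_gt hΓ2pos)
    have hCval : C = Real.Gamma (β + 1) * Real.Gamma (1 - α) / Real.Gamma (β + 2 - α) := by
      field_simp
      linarith [hbeta]
    rw [hCval, hrec]
    field_simp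

lemma RL_rpow_mul (α β c t : ℝ) (hα0 : 0 < α) (hα1 : α < 1) (hβ : -1 < β) (ht : 0 < t) :
    RLderiv α (fun τ => τ ^ β * c) t =
      Real.Gamma (β + 1) / Real.Gamma (β + 1 - α) * t ^ (β - α) * c := by
  have hfun : (fun τ : ℝ => ∫ s in (0:ℝ)..τ, (s ^ β * c) * (τ - s) ^ (-α))
      = fun τ : ℝ => c * ∫ s in (0:ℝ)..τ, s ^ β * (τ - s) ^ (-α) := by
    funext τ
    rw [← intervalIntegral.integral_const_mul]
    apply intervalIntegral.integral_congr
    intro s _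
    ring
  have h := RL_rpow α β t hα0 hα1 hβ ht
  simp only [RLderiv] at h ⊢
  rw [hfun, deriv_const_mul_field]
  linear_combination c * h

/-- Case 2.1, `U₅`: with `A = Γ(1-α/m)/Γ(1-(m+1)α/m)`,
`B = Γ(1-(m+1)α/m)/Γ(1-(2m+1)α/m)`, if `φ > 0` and `ψ` solve `ψ' = A·φ`,
`k²·φ^(2m)·φ' = B·ψ` on an open interval `I`, then
`u(x,t) = t^(-α/m)·φ(x)`, `v(x,t) = t^(-(m+1)α/m)·ψ(x)` solves system (15)
for `x ∈ I`, `t > 0`. -/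
theorem invariant_solution_case21_U5 (α k m p q : ℝ)
    (hα0 : 0 < α) (hα1 : α < 1) (hk : k ≠ 0)
    (hm : m < 0 ∨ α / (1 - α) < m)
    (A B : ℝ)
    (hA : A = Real.Gamma (1 - α / m) / Real.Gamma (1 - (m + 1) * α / m))
    (hB : B = Real.Gamma (1 - (m + 1) * α / m) / Real.Gamma (1 - (2 * m + 1) * α / m))
    (φ ψ : ℝ → ℝ)
    (hdiff : ∀ x ∈ Set.Ioo p q, DifferentiableAt ℝ φ x ∧ DifferentiableAt ℝ ψ x)
    (hφpos : ∀ x ∈ Set.Ioo p q, 0 < φ x)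
    (hode₁ : ∀ x ∈ Set.Ioo p q, deriv ψ x = A * φ x)
    (hode₂ : ∀ x ∈ Set.Ioo p q, k ^ 2 * φ x ^ (2 * m) * deriv φ x = B * ψ x) :
    ∀ x ∈ Set.Ioo p q, ∀ t : ℝ, 0 < t →
      RLderiv α (fun t' => t' ^ (-α / m) * φ x) t =
        deriv (fun x' => t ^ (-(m + 1) * α / m) * ψ x') x ∧
      RLderiv α (fun t' => t' ^ (-(m + 1) * α / m) * ψ x) t =
        k ^ 2 * (t ^ (-α / m) * φ x) ^ (2 * m) *
          deriv (fun x' => t ^ (-α / m) * φ x') x := by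
  intro x hx t ht
  have hm0 : m ≠ 0 := by
    rcases hm with h | h
    · exact ne_of_lt h
    · exact ne_of_gt (lt_trans (div_pos hα0 (by linarith)) h)
  have hβ₁ : -1 < -α / m := by
    rcases hm with h | h
    · have h2 : α / m < 0 := div_neg_of_pos_of_neg hα0 h
      rw [neg_div]; linarith
    · have h3 : α < m * (1 - α) := by
        have := (div_lt_iff₀ (by linarith : (0:ℝ) < 1 - α)).mp h
        nlinarith
      have hm' : 0 < m := lt_trans (div_pos hα0 (by linarith)) h
      have h4 : α / m < 1 := (div_lt_one hm').mpr (by nlinarith)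
      rw [neg_div]; linarith
  have hβ₂ : -1 < -(m + 1) * α / m := by
    have e2 : -(m + 1) * α / m = -(α + α / m) := by field_simp
    rcases hm with h | h
    · have h2 : α / m < 0 := div_neg_of_pos_of_neg hα0 h
      rw [e2]; linarith
    · have hm' : 0 < m := lt_trans (div_pos hα0 (by linarith)) h
      have h3 : α < m * (1 - α) := by
        have := (div_lt_iff₀ (by linarith : (0:ℝ) < 1 - α)).mp h
        nlinarith
      have h4 : α / m < 1 - α := (div_lt_iff₀ hm').mpr (by nlinarith)
      rw [e2]; linarith
  have g1 : -α / m + 1 = 1 - α / m := by ring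
  have g2 : -α / m + 1 - α = 1 - (m + 1) * α / m := by field_simp; ring
  have g3 : -α / m - α = -(m + 1) * α / m := by field_simp; ring
  have g4 : -(m + 1) * α / m + 1 = 1 - (m + 1) * α / m := by ring
  have g5 : -(m + 1) * α / m + 1 - α = 1 - (2 * m + 1) * α / m := by field_simp; ring
  constructor
  · rw [RL_rpow_mul α (-α / m) (φ x) t hα0 hα1 hβ₁ ht, deriv_const_mul_field,
      hode₁ x hx, g2, g1, g3, ← hA]
    ring
  · rw [RL_rpow_mul α (-(m + 1) * α / m) (ψ x) t hα0 hα1 hβ₂ ht, g5, g4, ← hB,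
      deriv_const_mul_field,
      Real.mul_rpow (Real.rpow_nonneg ht.le _) (hφpos x hx).le, ← Real.rpow_mul ht.le]
    have key := hode₂ x hx
    have hexp : t ^ (-(m + 1) * α / m - α) = t ^ (-α / m * (2 * m)) * t ^ (-α / m) := by
      rw [← Real.rpow_add ht]
      congr 1
      field_simp
      ring
    rw [hexp]
    linear_combination (-(t ^ (-α / m * (2 * m)) * t ^ (-α / m))) * key
end

section
/- Let 0<α<1 and let b:ℝ→ℝ. Suppose φ,ψ:(0,∞)→ℝ are differentiable and satisfy the reduced system (D^α φ)(z) = −(1/α)·z·ψ'(z) and (D^α ψ)(z) = −(1/α)·z·b(φ(z))²·φ'(z) for all z>0 (with the fractional derivatives existing for all z>0). Then, with the similarity variable z = t·x^{−1/α}, the pair u(x,t) = φ(t·x^{−1/α}), v(x,t) = ψ(t·x^{−1/α}) solves system (1), i.e. D^α_t u = ∂v/∂x and D^α_t v = b(u)²·∂u/∂x, for all x>0 and t>0. -/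
/-- Scaling property of the Riemann–Liouville derivative:
`D^α (f(c·)) (t) = c^α · (D^α f)(ct)` for `c > 0`, `t > 0`. -/
lemma RL_scale (α : ℝ) (φ : ℝ → ℝ) (c : ℝ) (hc : 0 < c)
    (t : ℝ) (ht : 0 < t)
    (hex : DifferentiableAt ℝ
      (fun τ : ℝ => ∫ s in (0:ℝ)..τ, φ s * (τ - s) ^ (-α)) (t * c)) :
    RLderiv α (fun t' => φ (t' * c)) t = c ^ α * RLderiv α φ (t * c) := by
  unfold RLderiv
  set G : ℝ → ℝ := fun τ : ℝ => ∫ s in (0:ℝ)..τ, φ s * (τ - s) ^ (-α) with hG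
  have key : ∀ τ : ℝ, 0 < τ →
      (∫ s in (0:ℝ)..τ, φ (s * c) * (τ - s) ^ (-α))
        = c ^ (α - 1) * G (τ * c) := by
    intro τ hτ
    have h1 : (∫ s in (0:ℝ)..τ, φ (s * c) * (τ - s) ^ (-α))
        = ∫ s in (0:ℝ)..τ, c ^ α * (φ (s * c) * ((τ * c - s * c)) ^ (-α)) := by
      apply intervalIntegral.integral_congr
      intro s hs
      rw [Set.uIcc_of_le hτ.le] at hs
      have hs1 : 0 ≤ τ - s := by linarith [hs.2]
      have heq : τ * c - s * c = (τ - s) * c := by ring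
      show φ (s * c) * (τ - s) ^ (-α)
        = c ^ α * (φ (s * c) * (τ * c - s * c) ^ (-α))
      rw [heq, Real.mul_rpow hs1 hc.le]
      have hone : c ^ α * (c : ℝ) ^ (-α) = 1 := by
        rw [← Real.rpow_add hc]; simp
      calc φ (s * c) * (τ - s) ^ (-α)
          = (c ^ α * c ^ (-α)) * (φ (s * c) * (τ - s) ^ (-α)) := by
            rw [hone, one_mul]
        _ = c ^ α * (φ (s * c) * ((τ - s) ^ (-α) * c ^ (-α))) := by ring
    rw [h1, intervalIntegral.integral_const_mul]
    have h2 : (∫ s in (0:ℝ)..τ, φ (s * c) * (τ * c - s * c) ^ (-α))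
        = c⁻¹ • ∫ s in (0:ℝ) * c..τ * c, φ s * (τ * c - s) ^ (-α) := by
      exact intervalIntegral.integral_comp_mul_right
        (fun s => φ s * (τ * c - s) ^ (-α)) hc.ne'
    rw [h2]
    simp only [zero_mul, smul_eq_mul]
    rw [hG, Real.rpow_sub hc, Real.rpow_one]
    ring
  have hev : (fun τ : ℝ => ∫ s in (0:ℝ)..τ, φ (s * c) * (τ - s) ^ (-α))
      =ᶠ[nhds t] (fun τ => c ^ (α - 1) * G (τ * c)) := by
    filter_upwards [Ioi_mem_nhds ht] with τ hτ using key τ hτ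
  rw [hev.deriv_eq]
  have hd : HasDerivAt (fun τ : ℝ => c ^ (α - 1) * G (τ * c))
      (c ^ (α - 1) * (deriv G (t * c) * c)) t := by
    have := ((hex.hasDerivAt.comp t ((hasDerivAt_id t).mul_const c))).const_mul
      (c ^ (α - 1))
    simpa [Function.comp] using this
  rw [hd.deriv]
  have h3 : c ^ (α - 1) * c = c ^ α := by
    rw [← Real.rpow_add_one hc.ne', sub_add_cancel]
  linear_combination (1 / Real.Gamma (1 - α) * deriv G (t * c)) * h3

/-- Case 1, `U₂`: if differentiable `φ, ψ` solve the reduced system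
`D^α φ(z) = -(1/α)·z·ψ'(z)`, `D^α ψ(z) = -(1/α)·z·b(φ(z))²·φ'(z)` for `z > 0`
(with the fractional derivatives existing for all `z > 0`), then, with the
similarity variable `z = t·x^(-1/α)`, the pair `u(x,t) = φ(t·x^(-1/α))`,
`v(x,t) = ψ(t·x^(-1/α))` solves system (1) for `x > 0`, `t > 0`. -/
theorem invariant_solution_case1_U2 (α : ℝ) (hα0 : 0 < α) (hα1 : α < 1)
    (b : ℝ → ℝ) (φ ψ : ℝ → ℝ)
    (hφdiff : ∀ z : ℝ, 0 < z → DifferentiableAt ℝ φ z)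
    (hψdiff : ∀ z : ℝ, 0 < z → DifferentiableAt ℝ ψ z)
    (hφ_ex : ∀ z : ℝ, 0 < z →
      DifferentiableAt ℝ (fun τ : ℝ => ∫ s in (0:ℝ)..τ, φ s * (τ - s) ^ (-α)) z)
    (hψ_ex : ∀ z : ℝ, 0 < z →
      DifferentiableAt ℝ (fun τ : ℝ => ∫ s in (0:ℝ)..τ, ψ s * (τ - s) ^ (-α)) z)
    (hode₁ : ∀ z : ℝ, 0 < z → RLderiv α φ z = -(1 / α) * z * deriv ψ z)
    (hode₂ : ∀ z : ℝ, 0 < z →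
      RLderiv α ψ z = -(1 / α) * z * (b (φ z)) ^ 2 * deriv φ z) :
    ∀ x : ℝ, 0 < x → ∀ t : ℝ, 0 < t →
      RLderiv α (fun t' => φ (t' * x ^ (-(1 / α)))) t =
        deriv (fun x' => ψ (t * x' ^ (-(1 / α)))) x ∧
      RLderiv α (fun t' => ψ (t' * x ^ (-(1 / α)))) t =
        (b (φ (t * x ^ (-(1 / α))))) ^ 2 *
          deriv (fun x' => φ (t * x' ^ (-(1 / α)))) x := by
  intro x hx t ht
  set p : ℝ := -(1 / α) with hp
  have hc : 0 < x ^ p := Real.rpow_pos_of_pos hx p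
  set c : ℝ := x ^ p with hcdef
  have hz : 0 < t * c := mul_pos ht hc
  -- c^α = x⁻¹
  have hcα : c ^ α = x⁻¹ := by
    rw [hcdef, ← Real.rpow_mul hx.le]
    have : p * α = -1 := by
      rw [hp]; field_simp
    rw [this, Real.rpow_neg_one]
  -- x^(p-1) = c * x⁻¹
  have hxp1 : x ^ (p - 1) = c * x⁻¹ := by
    rw [Real.rpow_sub hx, Real.rpow_one, hcdef]
    rw [div_eq_mul_inv]
  -- derivative of x' ↦ x'^p at x
  have hdx : HasDerivAt (fun x' : ℝ => x' ^ p) (p * x ^ (p - 1)) x :=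
    Real.hasDerivAt_rpow_const (Or.inl hx.ne')
  have hdtx : HasDerivAt (fun x' : ℝ => t * x' ^ p) (t * (p * x ^ (p - 1))) x :=
    hdx.const_mul t
  constructor
  · have hψd : HasDerivAt (fun x' : ℝ => ψ (t * x' ^ p))
        (deriv ψ (t * c) * (t * (p * x ^ (p - 1)))) x :=
      ((hψdiff _ hz).hasDerivAt).comp x hdtx
    rw [RL_scale α φ c hc t ht (hφ_ex _ hz), hψd.deriv, hode₁ _ hz, hcα, hxp1]
    ring
  · have hφd : HasDerivAt (fun x' : ℝ => φ (t * x' ^ p))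
        (deriv φ (t * c) * (t * (p * x ^ (p - 1)))) x :=
      ((hφdiff _ hz).hasDerivAt).comp x hdtx
    rw [RL_scale α ψ c hc t ht (hψ_ex _ hz), hφd.deriv, hode₂ _ hz, hcα, hxp1]
    ring
end
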